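/- arXiv:0710.0960 — 12 statements merged into one kernel-verified Lean document; each statement's English description precedes it below -/
import Mathlib

section
/- Let W = ∑_{n≥0} w_n x^n ∈ (ℚ[t,t⁻¹])[[x]]. Then W satisfies the algebraic equation t(1+tx) − tW + 2tx²W² + x³W⁴ = 0. -/
open LaurentPolynomial PowerSeries

/-!
Write `W̄` for the image of `W` under `t ↦ t⁻¹` applied coefficientwise. The recursion says
`W = 1 + t x W̄²`, and applying `t ↦ t⁻¹` gives `W̄ = 1 + t⁻¹ x W²`. Substituting the second
equation into the first and multiplying by `t` eliminates `W̄`.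
-/

theorem PowerSeries.mk_eq_one_add_C_mul_X_mul_map_sq {R : Type*} [CommRing R] (σ : R →+* R)
    (u : R) (w : ℕ → R) (hw0 : w 0 = 1)
    (hw : ∀ n : ℕ, w (n + 1) = u * ∑ k ∈ Finset.range (n + 1), σ (w k) * σ (w (n - k))) :
    PowerSeries.mk w = 1 + C u * X * map σ (PowerSeries.mk w) ^ 2 := by
  ext (_ | n)
  · simp [hw0]
  · rw [coeff_mk, hw n, map_add, coeff_one, mul_assoc, coeff_C_mul, coeff_succ_X_mul, sq,
      coeff_mul, Finset.Nat.sum_antidiagonal_eq_sum_range_succ_mk]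
    simp

theorem eq_zero_of_eq_one_add_mul_sq {S : Type*} [CommRing S] {a b x W V : S} (hab : a * b = 1)
    (hW : W = 1 + a * x * V ^ 2) (hV : V = 1 + b * x * W ^ 2) :
    a * (1 + a * x) - a * W + 2 * a * x ^ 2 * W ^ 2 + x ^ 3 * W ^ 4 = 0 := by
  rw [hV] at hW
  linear_combination (-a) * hW - (2 * a * x ^ 2 * W ^ 2 + x ^ 3 * W ^ 4 * (1 + a * b)) * hab

/-- If `w : ℕ → ℚ[T;T⁻¹]` is the sequence of Laurent polynomials defined
by `w 0 = 1` and `w (n+1) (t) = t * ∑_{k=0}^{n} w k (t⁻¹) * w (n-k) (t⁻¹)`, then the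
generating series `W = ∑ w n * x^n ∈ (ℚ[t,t⁻¹])[[x]]` satisfies
`t(1+tx) − tW + 2tx²W² + x³W⁴ = 0`. -/
theorem stmt0 (w : ℕ → ℚ[T;T⁻¹])
    (hw0 : w 0 = 1)
    (hw : ∀ n : ℕ, w (n + 1) =
      T 1 * ∑ k ∈ Finset.range (n + 1), invert (w k) * invert (w (n - k)))
    (W : (ℚ[T;T⁻¹])⟦X⟧) (hW : W = PowerSeries.mk fun n => w n) :
    PowerSeries.C (R := ℚ[T;T⁻¹]) (T 1) * (1 + PowerSeries.C (R := ℚ[T;T⁻¹]) (T 1) * PowerSeries.X)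
      - PowerSeries.C (R := ℚ[T;T⁻¹]) (T 1) * W
      + 2 * PowerSeries.C (R := ℚ[T;T⁻¹]) (T 1) * PowerSeries.X ^ 2 * W ^ 2
      + PowerSeries.X ^ 3 * W ^ 4 = 0 := by
  set σ : ℚ[T;T⁻¹] →+* ℚ[T;T⁻¹] := (invert (R := ℚ)).toRingHom
  have hσσ : σ.comp σ = RingHom.id ℚ[T;T⁻¹] := RingHom.ext involutive_invert
  have hWeq : W = 1 + PowerSeries.C (T 1) * X * map σ W ^ 2 :=
    hW ▸ PowerSeries.mk_eq_one_add_C_mul_X_mul_map_sq σ (T 1) w hw0 hw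
  have hσσW : map σ (map σ W) = W := by
    rw [← RingHom.comp_apply, ← map_comp, hσσ, map_id, id]
  have hWbar : map σ W = 1 + PowerSeries.C (T (-1)) * X * W ^ 2 := by
    conv_lhs => rw [hWeq]
    rw [map_add, map_one, map_mul, map_mul, map_pow, map_C, map_X, hσσW]
    simp [σ]
  refine eq_zero_of_eq_one_add_mul_sq ?_ hWeq hWbar
  rw [← map_mul, ← T_add]
  simp
end

section
/- For every n ∈ ℕ and every j ∈ ℤ, the coefficients of the Laurent polynomial w_n satisfy (n+2+3j)·(w_n, t^{−j}) = (n+2−3j)·(w_n, t^{j}). -/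
/-!
Let `W = ∑ wₙ xⁿ` and let `V` be its image under `t ↦ t⁻¹`, so that `W = 1 + x t V²` and
`V = 1 + x t⁻¹ W²`. The derivation `δ = x ∂ₓ - 3 t ∂ₜ` scales `x t` by `-2` and `x t⁻¹` by `4`;
differentiating the system and eliminating `δ V` gives `(1 - 4 x² W V) (δ W + 2 W) = 2`.
The mirror computation with `x ∂ₓ + 3 t ∂ₜ` gives the same identity for `V` with the same
invertible factor, so `(x ∂ₓ - 3 t ∂ₜ + 2) W = (x ∂ₓ + 3 t ∂ₜ + 2) V`; the coefficient of
`xⁿ tʲ` on both sides is the claim.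
-/

open LaurentPolynomial PowerSeries

namespace AddMonoidAlgebra

variable {R G : Type*} [CommSemiring R] [AddCommMonoid G]

noncomputable def gradeLinearMap (φ : G →+ R) : R[G] →ₗ[R] R[G] :=
  Finsupp.lsum R (fun g => φ g • lsingle g) ∘ₗ (coeffLinearEquiv R).toLinearMap

@[simp] lemma gradeLinearMap_single (φ : G →+ R) (g : G) (r : R) :
    gradeLinearMap φ (single g r) = single g (φ g * r) := by
  simp [gradeLinearMap]

lemma gradeLinearMap_mul (φ : G →+ R) (a b : R[G]) :
    gradeLinearMap φ (a * b) = a * gradeLinearMap φ b + b * gradeLinearMap φ a := by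
  induction a using induction_linear with
  | zero => simp
  | add a₁ a₂ h₁ h₂ => simp only [add_mul, map_add, h₁, h₂]; ring
  | single g r =>
    induction b using induction_linear with
    | zero => simp
    | add b₁ b₂ h₁ h₂ => simp only [mul_add, map_add, h₁, h₂]; ring
    | single h s =>
      simp only [single_mul_single, gradeLinearMap_single, map_add]
      rw [add_comm h g, ← single_add]
      congr 1
      ring

noncomputable def gradeDerivation (φ : G →+ R) : Derivation R R[G] R[G] where
  toLinearMap := gradeLinearMap φ
  map_one_eq_zero' := by simp [one_def]
  leibniz' := gradeLinearMap_mul φ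

lemma coeff_gradeDerivation (φ : G →+ R) (f : R[G]) (g : G) :
    (gradeDerivation φ f).coeff g = φ g * f.coeff g := by
  classical
  induction f using induction_linear with
  | zero => simp
  | add f₁ f₂ h₁ h₂ => simp_all [mul_add]
  | single h r =>
    simp only [gradeDerivation, Derivation.mk_coe, gradeLinearMap_single, coeff_single,
      Finsupp.single_apply]
    split_ifs with hhg
    · rw [hhg]
    · rw [mul_zero]

end AddMonoidAlgebra

namespace Derivation

variable {R A : Type*} [CommSemiring R] [CommSemiring A] [Algebra R A]

noncomputable def mapPowerSeries (d : Derivation R A A) : Derivation R A⟦X⟧ A⟦X⟧ where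
  toFun f := PowerSeries.mk fun n => d (coeff n f)
  map_add' f g := by ext; simp
  map_smul' r f := by ext; simp
  map_one_eq_zero' := by ext n; by_cases hn : n = 0 <;> simp [coeff_one, hn]
  leibniz' f g := by
    change PowerSeries.mk (fun n => d (coeff n (f * g))) =
      f * PowerSeries.mk (fun n => d (coeff n g)) + g * PowerSeries.mk (fun n => d (coeff n f))
    rw [mul_comm g]
    ext n
    simp only [coeff_mk, map_add, coeff_mul, map_sum, leibniz, smul_eq_mul, Finset.sum_add_distrib]
    simp only [mul_comm]

@[simp] lemma coeff_mapPowerSeries (d : Derivation R A A) (f : A⟦X⟧) (n : ℕ) :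
    coeff n (d.mapPowerSeries f) = d (coeff n f) :=
  coeff_mk n fun n => d (coeff n f)

theorem one_sub_mul_apply_add_two_mul_eq_two {R A : Type*} [CommRing R] [CommRing A]
    [Algebra R A] (δ : Derivation R A A) {u v W V : A} (hW : W = 1 + u * V ^ 2)
    (hV : V = 1 + v * W ^ 2) (hu : δ u = (-2 : R) • u) (hv : δ v = (4 : R) • v) :
    (1 - 4 * u * v * W * V) * (δ W + 2 * W) = 2 := by
  simp only [Algebra.smul_def, map_neg, map_ofNat] at hu hv
  have hδW : δ W = -2 * u * V ^ 2 + 2 * u * V * δ V := by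
    conv_lhs => rw [hW]
    simp only [map_add, map_one_eq_zero, leibniz, leibniz_pow, hu, smul_eq_mul]
    ring
  have hδV : δ V = 4 * v * W ^ 2 + 2 * v * W * δ W := by
    conv_lhs => rw [hV]
    simp only [map_add, map_one_eq_zero, leibniz, leibniz_pow, hv, smul_eq_mul]
    ring
  linear_combination hδW + 2 * u * V * hδV + 2 * hW

end Derivation

namespace PowerSeries

theorem mk_eq_one_add_X_mul_C_mul_sq {A : Type*} [CommSemiring A] {a b : ℕ → A} (c : A)
    (h₀ : a 0 = 1) (h : ∀ n, a (n + 1) = c * ∑ k ∈ Finset.range (n + 1), b k * b (n - k)) :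
    mk a = 1 + X * C c * mk b ^ 2 := by
  ext n
  cases n with
  | zero => simp [h₀]
  | succ n =>
    rw [coeff_mk, h, map_add, mul_assoc, coeff_succ_X_mul, coeff_C_mul, sq, coeff_mul,
      Finset.Nat.sum_antidiagonal_eq_sum_range_succ_mk]
    simp

lemma coeff_X_mul_derivative {A : Type*} [CommSemiring A] (f : A⟦X⟧) (n : ℕ) :
    coeff n (X * d⁄dX A f) = n * coeff n f := by
  cases n with
  | zero => simp
  | succ n => simp [coeff_succ_X_mul, coeff_derivative, mul_comm]

end PowerSeries

/-- The operator `x ∂ₓ + c t ∂ₜ` on `ℚ[t, t⁻¹]⟦x⟧`. -/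
noncomputable def weightedEuler (c : ℚ) : Derivation ℚ ℚ[T;T⁻¹]⟦X⟧ ℚ[T;T⁻¹]⟦X⟧ :=
  (X : ℚ[T;T⁻¹]⟦X⟧) • (d⁄dX ℚ[T;T⁻¹]).restrictScalars ℚ +
    c • (AddMonoidAlgebra.gradeDerivation (Int.castAddHom ℚ)).mapPowerSeries

lemma coeff_coeff_weightedEuler (c : ℚ) (F : ℚ[T;T⁻¹]⟦X⟧) (n : ℕ) (j : ℤ) :
    (coeff n (weightedEuler c F)).coeff j = (n + c * j) * (coeff n F).coeff j := by
  simp only [weightedEuler, Derivation.add_apply, Derivation.smul_apply, smul_eq_mul,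
    Derivation.restrictScalars_apply, map_add, coeff_X_mul_derivative, ← nsmul_eq_mul,
    LinearMap.map_smul_of_tower, Derivation.coeff_mapPowerSeries, AddMonoidAlgebra.coeff_add,
    AddMonoidAlgebra.coeff_smul, Finsupp.coe_add, Finsupp.coe_smul, Pi.add_apply, Pi.smul_apply,
    AddMonoidAlgebra.coeff_gradeDerivation, Int.coe_castAddHom]
  ring

lemma weightedEuler_X_mul_C_T (c : ℚ) (k : ℤ) :
    weightedEuler c (X * PowerSeries.C (T k)) = (1 + c * k) • (X * PowerSeries.C (T k)) := by
  ext n j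
  rw [coeff_coeff_weightedEuler]
  simp only [coeff_smul, coeff_mul_C, coeff_X]
  split_ifs with hn
  · subst hn
    rw [one_mul, AddMonoidAlgebra.coeff_smul, Finsupp.smul_apply, T_apply, smul_eq_mul]
    split_ifs with hk
    · subst hk; simp
    · simp
  · simp

/-- For the Laurent polynomials `w n` defined by `w 0 = 1` and
`w (n+1) (t) = t * ∑_{k=0}^{n} w k (t⁻¹) * w (n-k) (t⁻¹)`, the coefficients satisfy
`(n+2+3j)·(w_n, t^{−j}) = (n+2−3j)·(w_n, t^{j})` for all `n ∈ ℕ`, `j ∈ ℤ`. -/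
theorem stmt2 (w : ℕ → ℚ[T;T⁻¹])
    (hw0 : w 0 = 1)
    (hw : ∀ n : ℕ, w (n + 1) =
      T 1 * ∑ k ∈ Finset.range (n + 1), invert (w k) * invert (w (n - k)))
    (n : ℕ) (j : ℤ) :
    ((n : ℚ) + 2 + 3 * (j : ℚ)) * (w n).coeff (-j) = ((n : ℚ) + 2 - 3 * (j : ℚ)) * (w n).coeff j := by
  set W : ℚ[T;T⁻¹]⟦X⟧ := mk w
  set V : ℚ[T;T⁻¹]⟦X⟧ := mk fun k => invert (w k)
  have hW : W = 1 + X * PowerSeries.C (T 1) * V ^ 2 := mk_eq_one_add_X_mul_C_mul_sq _ hw0 hw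
  have hV : V = 1 + X * PowerSeries.C (T (-1)) * W ^ 2 :=
    mk_eq_one_add_X_mul_C_mul_sq _ (by simp [hw0]) fun n => by
      simp [hw n, map_sum, involutive_invert _]
  have hWV := (weightedEuler (-3)).one_sub_mul_apply_add_two_mul_eq_two hW hV
    (by rw [weightedEuler_X_mul_C_T]; norm_num) (by rw [weightedEuler_X_mul_C_T]; norm_num)
  have hVW := (weightedEuler 3).one_sub_mul_apply_add_two_mul_eq_two hV hW
    (by rw [weightedEuler_X_mul_C_T]; norm_num) (by rw [weightedEuler_X_mul_C_T]; norm_num)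
  have hunit :
      IsUnit (1 - 4 * (X * PowerSeries.C (T 1)) * (X * PowerSeries.C (T (-1))) * W * V) := by
    rw [isUnit_iff_constantCoeff]
    simp
  have hsymm : weightedEuler (-3) W + 2 * W = weightedEuler 3 V + 2 * V :=
    hunit.mul_left_cancel (hWV.trans (hVW.symm.trans (by ring)))
  have hcoeff := congrArg (fun F => (coeff n F).coeff j) hsymm
  simp only [two_mul, map_add, coeff_mk, AddMonoidAlgebra.coeff_add, Finsupp.coe_add,
    Pi.add_apply, coeff_coeff_weightedEuler, invert_apply, W, V] at hcoeff
  linear_combination -hcoeff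
end

section
/- Let W = ∑_{n≥0} w_n x^n ∈ (ℚ[t,t⁻¹])[[x]], let W_x = ∑_{n≥1} n·w_n·x^{n−1} be the formal derivative of W with respect to x, and let W_t = ∑_{n≥0} w_n′ x^n where w_n′ ∈ ℚ[t,t⁻¹] is the formal derivative of the Laurent polynomial w_n with respect to t (so the coefficient of t^{j−1} in w_n′ is j·(w_n,t^j)). Then 2t(1−W) + x(2xW − t)·W_x + 3t(t+2xW)·W_t = 0 in (ℚ[t,t⁻¹])[[x]]. -/
/-!
Let `V` be the series obtained from `W` by `t ↦ t⁻¹` in every coefficient. The recursion says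
`W = 1 + t x V²`, and inverting `t` gives `V = 1 + t⁻¹ x W²`. Differentiating this pair of
equations in `x`, resp. in `t`, gives two linear systems for `(W_x, V_x)` and `(W_t, V_t)`, both
with determinant `1 - 4x²WV`, a unit of the power series ring. Solving them, the claimed
combination times `1 - 4x²WV` becomes a polynomial identity modulo the two quadratic equations.
Only the Leibniz rule is used, and both `∂/∂x` and the coefficientwise `∂/∂t` obey it.
-/

open LaurentPolynomial PowerSeries

noncomputable def lderiv (p : ℚ[T;T⁻¹]) : ℚ[T;T⁻¹] :=
  p.coeff.sum fun j a => LaurentPolynomial.C ((j : ℚ) * a) * T (j - 1)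

lemma lderiv_C_mul_T (n : ℤ) (a : ℚ) :
    lderiv (LaurentPolynomial.C a * T n) = LaurentPolynomial.C ((n : ℚ) * a) * T (n - 1) := by
  rw [← single_eq_C_mul_T, lderiv]
  exact Finsupp.sum_single_index (by simp)

lemma lderiv_add (p q : ℚ[T;T⁻¹]) : lderiv (p + q) = lderiv p + lderiv q :=
  Finsupp.sum_add_index (by simp) fun _ _ _ _ => by rw [mul_add, map_add, add_mul]

lemma lderiv_T_one : lderiv (T 1) = 1 := by
  simpa using lderiv_C_mul_T 1 1

lemma lderiv_mul (p q : ℚ[T;T⁻¹]) : lderiv (p * q) = p * lderiv q + q * lderiv p := by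
  induction p using LaurentPolynomial.induction_on' with
  | add p₁ p₂ h₁ h₂ => rw [add_mul, lderiv_add, lderiv_add, h₁, h₂]; ring
  | C_mul_T n a =>
    induction q using LaurentPolynomial.induction_on' with
    | add q₁ q₂ h₁ h₂ => rw [mul_add, lderiv_add, lderiv_add, h₁, h₂]; ring
    | C_mul_T m b =>
      have hprod : LaurentPolynomial.C a * T n * (LaurentPolynomial.C b * T m)
          = LaurentPolynomial.C (a * b) * T (n + m) := by
        rw [map_mul, T_add]; ring
      have hT : (T m : ℚ[T;T⁻¹]) * T (n - 1) = T n * T (m - 1) := by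
        rw [← T_add, ← T_add]; ring_nf
      rw [hprod, lderiv_C_mul_T, lderiv_C_mul_T, lderiv_C_mul_T,
        show n + m - 1 = n + (m - 1) by ring, T_add]
      simp only [map_mul, Int.cast_add, add_mul, map_add]
      linear_combination (-(LaurentPolynomial.C b * LaurentPolynomial.C (n : ℚ)
        * LaurentPolynomial.C a)) * hT

noncomputable def lderivDerivation : Derivation ℚ ℚ[T;T⁻¹] ℚ[T;T⁻¹] :=
  let D : ℚ[T;T⁻¹] →+ ℚ[T;T⁻¹] := AddMonoidHom.mk' lderiv lderiv_add
  Derivation.mk' { D with map_smul' := map_rat_smul D } lderiv_mul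

@[simp]
lemma lderivDerivation_apply (p : ℚ[T;T⁻¹]) : lderivDerivation p = lderiv p := rfl

namespace Derivation

variable {R A : Type*} [CommSemiring R] [CommRing A] [Algebra R A]

noncomputable def powerSeriesMapCoeffs (D : Derivation R A A) : Derivation R A⟦X⟧ A⟦X⟧ :=
  Derivation.mk'
    { toFun := fun f => PowerSeries.mk fun n => D (coeff n f)
      map_add' := fun f g => by ext; simp
      map_smul' := fun r f => by ext; simp }
    fun f g => by
      ext n
      simp only [LinearMap.coe_mk, AddHom.coe_mk, coeff_mk, smul_eq_mul, map_add, coeff_mul,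
        map_sum, leibniz, Finset.sum_add_distrib]
      exact congrArg _
        (Finset.Nat.sum_antidiagonal_swap (f := fun p => coeff p.1 g * D (coeff p.2 f)))

@[simp]
lemma coeff_powerSeriesMapCoeffs (D : Derivation R A A) (f : A⟦X⟧) (n : ℕ) :
    coeff n (D.powerSeriesMapCoeffs f) = D (coeff n f) := by
  simp [powerSeriesMapCoeffs]

lemma powerSeriesMapCoeffs_C (D : Derivation R A A) (a : A) :
    D.powerSeriesMapCoeffs (PowerSeries.C a) = PowerSeries.C (D a) := by
  ext n; by_cases hn : n = 0 <;> simp [coeff_C, hn]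

lemma powerSeriesMapCoeffs_X (D : Derivation R A A) : D.powerSeriesMapCoeffs X = 0 := by
  ext n; by_cases hn : n = 1 <;> simp [coeff_X, hn]

end Derivation

section
variable {R S A : Type*} [CommSemiring R] [CommSemiring S] [CommRing A] [Algebra R A] [Algebra S A]

theorem pde_of_coupled_quadratics (Dx : Derivation R A A) (Dt : Derivation S A A) {x t s u v : A}
    (hDx_x : Dx x = 1) (hDx_t : Dx t = 0) (hDt_x : Dt x = 0) (hDt_t : Dt t = 1) (hst : s * t = 1)
    (hu : u = 1 + t * (x * (v * v))) (hv : v = 1 + s * (x * (u * u)))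
    (hreg : 1 - 4 * x * x * u * v ∈ nonZeroDivisors A) :
    2 * t * (1 - u) + x * (2 * x * u - t) * Dx u + 3 * t * (t + 2 * x * u) * Dt u = 0 := by
  have hDx_st := congrArg Dx hst
  have hDt_st := congrArg Dt hst
  have hDx_u := congrArg Dx hu
  have hDx_v := congrArg Dx hv
  have hDt_u := congrArg Dt hu
  have hDt_v := congrArg Dt hv
  simp only [map_add, Derivation.leibniz, Derivation.map_one_eq_zero, smul_eq_mul,
    hDx_x, hDx_t, hDt_x, hDt_t] at hDx_st hDt_st hDx_u hDx_v hDt_u hDt_v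
  have hDx_s : Dx s = 0 := by linear_combination s * hDx_st - Dx s * hst
  have hDt_s : Dt s = -(s * s) := by linear_combination s * hDt_st - Dt s * hst
  rw [hDx_s] at hDx_v
  rw [hDt_s] at hDt_v
  have hDx_u' : Dx u * (1 - 4 * x * x * u * v) = t * (v * v) + 2 * x * v * (u * u) := by
    linear_combination hDx_u + (2 * t * x * v) * hDx_v
      + (2 * x * u * u * v + 4 * x * x * u * v * Dx u) * hst
  have hDt_u' : Dt u * (1 - 4 * x * x * u * v) = x * (v * v) - 2 * s * x * x * v * (u * u) := by
    linear_combination hDt_u + (2 * t * x * v) * hDt_v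
      + (4 * x * x * u * v * Dt u - 2 * x * x * v * u * u * s) * hst
  refine (mul_right_mem_nonZeroDivisors_eq_zero_iff hreg).mp ?_
  linear_combination (x * (2 * x * u - t)) * hDx_u' + (3 * t * (t + 2 * x * u)) * hDt_u'
    - (2 * t) * hu + (8 * x * x * u * v * t) * hv
    - (4 * x ^ 3 * u ^ 3 * v + 6 * x ^ 2 * t * u ^ 2 * v) * hst
end

section
variable {R : Type*} [CommSemiring R]

lemma map_invert_map_invert (f : (R[T;T⁻¹])⟦X⟧) :
    map invert.toRingHom (map invert.toRingHom f) = f := by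
  ext n; simp [involutive_invert _]

theorem mk_eq_one_add_T_mul_X_mul_map_invert_mul_self (w : ℕ → R[T;T⁻¹]) (hw0 : w 0 = 1)
    (hw : ∀ n : ℕ, w (n + 1) =
      T 1 * ∑ k ∈ Finset.range (n + 1), invert (w k) * invert (w (n - k))) :
    PowerSeries.mk w = 1 + PowerSeries.C (T 1) *
      (X * (map invert.toRingHom (PowerSeries.mk w) * map invert.toRingHom (PowerSeries.mk w))) := by
  ext (_ | n)
  · simp [hw0]
  · rw [coeff_mk, hw n, map_add, coeff_C_mul, coeff_succ_X_mul, coeff_mul,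
      Finset.Nat.sum_antidiagonal_eq_sum_range_succ_mk]
    simp

end

/-- For the Laurent polynomials `w n` defined by `w 0 = 1` and
`w (n+1) (t) = t * ∑_{k=0}^{n} w k (t⁻¹) * w (n-k) (t⁻¹)`, the generating series
`W = ∑ w n x^n`, its formal `x`-derivative `Wx = ∑ (n+1)·w (n+1)·x^n` and its
coefficientwise `t`-derivative `Wt = ∑ (w n)' x^n` satisfy
`2t(1−W) + x(2xW − t)·Wx + 3t(t+2xW)·Wt = 0`. -/
theorem stmt3 (w : ℕ → ℚ[T;T⁻¹])
    (hw0 : w 0 = 1)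
    (hw : ∀ n : ℕ, w (n + 1) =
      T 1 * ∑ k ∈ Finset.range (n + 1), invert (w k) * invert (w (n - k)))
    (W Wx Wt : (ℚ[T;T⁻¹])⟦X⟧)
    (hW : W = PowerSeries.mk fun n => w n)
    (hWx : Wx = PowerSeries.mk fun n => ((n : ℚ[T;T⁻¹]) + 1) * w (n + 1))
    (hWt : Wt = PowerSeries.mk fun n => lderiv (w n)) :
    2 * PowerSeries.C (T 1 : ℚ[T;T⁻¹]) * (1 - W)
      + PowerSeries.X * (2 * PowerSeries.X * W - PowerSeries.C (T 1 : ℚ[T;T⁻¹])) * Wx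
      + 3 * PowerSeries.C (T 1 : ℚ[T;T⁻¹])
          * (PowerSeries.C (T 1 : ℚ[T;T⁻¹]) + 2 * PowerSeries.X * W) * Wt = 0 := by
  set V := map invert.toRingHom W with hV
  have hu : W = 1 + PowerSeries.C (T 1) * (X * (V * V)) := by
    rw [hV, hW]; exact mk_eq_one_add_T_mul_X_mul_map_invert_mul_self w hw0 hw
  have hv : V = 1 + PowerSeries.C (T (-1)) * (X * (W * W)) := by
    have hVV : map invert.toRingHom V = W := map_invert_map_invert W
    have h := congrArg (map invert.toRingHom) hu
    simp only [map_add, map_mul, map_one, PowerSeries.map_C, map_X, ← hV, hVV] at h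
    simpa using h
  have hWx' : Wx = d⁄dX _ W := by
    ext n : 1
    simp [hWx, hW, coeff_derivative, mul_comm]
  have hWt' : Wt = lderivDerivation.powerSeriesMapCoeffs W := by
    ext n : 1
    simp [hWt, hW]
  have hst : PowerSeries.C (T (-1) : ℚ[T;T⁻¹]) * PowerSeries.C (T 1) = 1 := by
    rw [← map_mul, ← T_add]; simp
  have hreg : 1 - 4 * X * X * W * V ∈ nonZeroDivisors (ℚ[T;T⁻¹])⟦X⟧ := by
    refine IsUnit.mem_nonZeroDivisors ?_
    simp [isUnit_iff_constantCoeff]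
  rw [hWx', hWt']
  exact pde_of_coupled_quadratics _ _ derivative_X derivative_C
    (Derivation.powerSeriesMapCoeffs_X _)
    (by simp [Derivation.powerSeriesMapCoeffs_C, lderiv_T_one]) hst hu hv hreg
end

section
/- For every n ∈ ℕ and every j ∈ ℤ with 3·|j| > n+2 one has (w_n, t^j) = 0; that is, the difference n_b − n_w of black and white triangles in any checkerboard triangulation of a convex polygon with n+2 vertices satisfies |n_b − n_w| ≤ (n+2)/3. -/
/-!
Every exponent `j` occurring in `w n` satisfies `-n ≤ 3 j ≤ n + 2`, by strong induction on `n`: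
an exponent of `w (n + 1)` has the form `1 - a - b` with `a` an exponent of `w k` and `b` one of
`w (n - k)`, and the inversion `t ↦ t⁻¹` swaps the two asymmetric bounds, which then add up to
the bounds for `n + 1`.
-/

open LaurentPolynomial

namespace LaurentPolynomial

variable {R : Type*} [Semiring R]

lemma coeff_T_mul (m : ℤ) (p : R[T;T⁻¹]) (j : ℤ) : (T m * p).coeff j = p.coeff (j - m) := by
  rw [T, AddMonoidAlgebra.coeff_single_mul_apply, one_mul, neg_add_eq_sub]

lemma exists_coeff_ne_zero_of_coeff_sum_ne_zero {ι : Type*} {s : Finset ι}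
    {f : ι → R[T;T⁻¹]} {j : ℤ} (h : (∑ i ∈ s, f i).coeff j ≠ 0) :
    ∃ i ∈ s, (f i).coeff j ≠ 0 := by
  rw [AddMonoidAlgebra.coeff_sum, Finset.sum_apply'] at h
  exact Finset.exists_ne_zero_of_sum_ne_zero h

lemma exists_coeff_ne_zero_of_coeff_mul_ne_zero {p q : R[T;T⁻¹]} {j : ℤ}
    (h : (p * q).coeff j ≠ 0) : ∃ a b, a + b = j ∧ p.coeff a ≠ 0 ∧ q.coeff b ≠ 0 := by
  classical
  obtain ⟨a, ha, b, hb, hab⟩ :=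
    Finset.mem_add.mp (AddMonoidAlgebra.support_coeff_mul_subset p q (Finsupp.mem_support_iff.mpr h))
  exact ⟨a, b, hab, Finsupp.mem_support_iff.mp ha, Finsupp.mem_support_iff.mp hb⟩

end LaurentPolynomial

section CheckerboardRecursion

variable {R : Type*} [CommSemiring R] (w : ℕ → R[T;T⁻¹])

lemma exists_coeff_ne_zero_of_coeff_succ_ne_zero
    (hw : ∀ n : ℕ, w (n + 1) =
      T 1 * ∑ k ∈ Finset.range (n + 1), invert (w k) * invert (w (n - k)))
    {n : ℕ} {j : ℤ} (h : (w (n + 1)).coeff j ≠ 0) :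
    ∃ k ≤ n, ∃ a b, a + b = 1 - j ∧ (w k).coeff a ≠ 0 ∧ (w (n - k)).coeff b ≠ 0 := by
  rw [hw, coeff_T_mul] at h
  obtain ⟨k, hk, hk'⟩ := exists_coeff_ne_zero_of_coeff_sum_ne_zero h
  obtain ⟨a, b, hab, ha, hb⟩ := exists_coeff_ne_zero_of_coeff_mul_ne_zero hk'
  rw [invert_apply] at ha hb
  exact ⟨k, Nat.lt_succ_iff.mp (Finset.mem_range.mp hk), -a, -b, by omega, ha, hb⟩

lemma neg_le_three_mul_and_three_mul_le_of_coeff_ne_zero (hw0 : w 0 = 1)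
    (hw : ∀ n : ℕ, w (n + 1) =
      T 1 * ∑ k ∈ Finset.range (n + 1), invert (w k) * invert (w (n - k)))
    (n : ℕ) {j : ℤ} (h : (w n).coeff j ≠ 0) : -(n : ℤ) ≤ 3 * j ∧ 3 * j ≤ n + 2 := by
  induction n using Nat.strong_induction_on generalizing j with
  | _ n ih =>
    cases n with
    | zero =>
      have hj : j = 0 := by
        by_contra hj
        rw [hw0, ← T_zero, T_apply, if_neg (Ne.symm hj)] at h
        exact h rfl
      omega
    | succ n =>
      obtain ⟨k, hk, a, b, hab, ha, hb⟩ := exists_coeff_ne_zero_of_coeff_succ_ne_zero w hw h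
      have hka := ih k (by omega) ha
      have hkb := ih (n - k) (by omega) hb
      push_cast [Nat.cast_sub hk] at hka hkb ⊢
      omega

end CheckerboardRecursion

/-- For the Laurent polynomials `w n` defined by `w 0 = 1` and
`w (n+1) (t) = t * ∑_{k=0}^{n} w k (t⁻¹) * w (n-k) (t⁻¹)`, the coefficient of `t^j`
in `w n` vanishes whenever `3·|j| > n+2`. -/
theorem stmt5 (w : ℕ → ℚ[T;T⁻¹])
    (hw0 : w 0 = 1)
    (hw : ∀ n : ℕ, w (n + 1) =
      T 1 * ∑ k ∈ Finset.range (n + 1), invert (w k) * invert (w (n - k)))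
    (n : ℕ) (j : ℤ) (h : 3 * |j| > (n : ℤ) + 2) :
    (w n).coeff j = 0 := by
  by_contra hj
  obtain ⟨hlow, hhigh⟩ := neg_le_three_mul_and_three_mul_le_of_coeff_ne_zero w hw0 hw n hj
  rcases abs_cases j with ⟨habs, _⟩ | ⟨habs, _⟩ <;> omega
end

section
/- Let T = ∑_{n≥0} w_n′(1)·x^n ∈ ℚ[[x]], where w_n′(1) = ∑_{j∈ℤ} j·(w_n, t^j) is the evaluation at t = 1 of the formal derivative of w_n. Then T satisfies the algebraic equation x − T + x(4x+3)·T² = 0. -/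
/-!
Evaluating `w n` at `t = 1 + ε` in the dual numbers records both `w n (1)` and `w n′(1)`.
Since `t ↦ t⁻¹` fixes the value at `1` and negates the derivative there, the recursion gives
`V = 1 + x V²` for `V = ∑ w n (1) xⁿ` and `S = x V² - 2 x V S` for `S = ∑ w n′(1) xⁿ`.
Multiplying the claimed equation by the unit `(1 + 2 x V)²` and substituting
`S (1 + 2 x V) = x V²` and `x V² = V - 1` reduces it to an identity.
-/

open LaurentPolynomial PowerSeries TrivSqZeroExt DualNumber

namespace DualNumber

variable {R : Type*} [CommRing R]

noncomputable def oneAddEpsUnit : R[ε]ˣ where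
  val := 1 + ε
  inv := 1 - ε
  val_inv := by ext <;> simp
  inv_val := by ext <;> simp

theorem val_oneAddEpsUnit_zpow (n : ℤ) :
    ((oneAddEpsUnit ^ n : R[ε]ˣ) : R[ε]) = 1 + inr (n : R) := by
  induction n using Int.induction_on with
  | zero => simp
  | succ k ih =>
    rw [zpow_add_one, Units.val_mul, ih]
    ext <;> simp [oneAddEpsUnit, add_comm]
  | pred k ih =>
    rw [zpow_sub_one, Units.val_mul, ih]
    ext <;> simp [oneAddEpsUnit]; ring

end DualNumber

namespace LaurentPolynomial

variable {R : Type*} [CommRing R]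

/-- `evalDual p = p(1) + p′(1) ε`. -/
noncomputable def evalDual : R[T;T⁻¹] →+* R[ε] :=
  eval₂ (algebraMap R R[ε]) oneAddEpsUnit

theorem evalDual_C_mul_T (a : R) (n : ℤ) : evalDual (C a * T n) = inl a + inr (n * a) := by
  rw [evalDual, map_mul, eval₂_C, eval₂_T, val_oneAddEpsUnit_zpow, algebraMap_eq_inl]
  ext <;> simp [mul_comm]

theorem evalDual_T_one : evalDual (T 1 : R[T;T⁻¹]) = 1 + ε := by
  rw [evalDual, eval₂_T, zpow_one]
  rfl

theorem snd_evalDual (p : R[T;T⁻¹]) :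
    snd (evalDual p) = p.coeff.sum fun j a => (j : R) * a := by
  induction p using LaurentPolynomial.induction_on' with
  | add p q hp hq =>
    rw [map_add, snd_add, hp, hq, AddMonoidAlgebra.coeff_add,
      Finsupp.sum_add_index' (fun _ => mul_zero _) fun _ _ _ => mul_add _ _ _]
  | C_mul_T n a =>
    rw [evalDual_C_mul_T, ← single_eq_C_mul_T, AddMonoidAlgebra.coeff_single,
      Finsupp.sum_single_index (mul_zero _)]
    simp

theorem fst_evalDual_invert (p : R[T;T⁻¹]) :
    fst (evalDual (invert p)) = fst (evalDual p) := by
  induction p using LaurentPolynomial.induction_on' with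
  | add p q hp hq => simp only [map_add, fst_add, hp, hq]
  | C_mul_T n a => simp [evalDual_C_mul_T]

theorem snd_evalDual_invert (p : R[T;T⁻¹]) :
    snd (evalDual (invert p)) = -snd (evalDual p) := by
  induction p using LaurentPolynomial.induction_on' with
  | add p q hp hq => simp only [map_add, snd_add, hp, hq, neg_add]
  | C_mul_T n a => simp [evalDual_C_mul_T]

end LaurentPolynomial

namespace PowerSeries

variable {R : Type*} [CommRing R]

theorem coeff_mk_mul_mk (f g : ℕ → R) (n : ℕ) :
    coeff n (mk f * mk g) = ∑ k ∈ Finset.range (n + 1), f k * g (n - k) := by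
  rw [coeff_mul, Finset.Nat.sum_antidiagonal_eq_sum_range_succ_mk]
  simp only [coeff_mk]

theorem mk_eq_C_add_X_mul {a : ℕ → R} {φ : R⟦X⟧} (h : ∀ n, a (n + 1) = coeff n φ) :
    mk a = PowerSeries.C (a 0) + X * φ := by
  ext (_ | n) <;> simp [coeff_succ_X_mul, h]

end PowerSeries

theorem sub_add_mul_sq_eq_zero_of_eq_one_add_mul_sq {A : Type*} [CommRing A] {x c s : A}
    (hu : IsUnit (1 + 2 * x * c)) (hc : c = 1 + x * c ^ 2)
    (hs : s = x * c ^ 2 - 2 * x * c * s) :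
    x - s + x * (4 * x + 3) * s ^ 2 = 0 := by
  refine (hu.pow 2).mul_left_eq_zero.mp ?_
  linear_combination
    (-(1 + 2 * x * c) + x * (4 * x + 3) * (s + 2 * x * s * c + x * c ^ 2)) * hs
      + (-(4 * x ^ 3 * c ^ 2 + 3 * x ^ 2 * c ^ 2 + 4 * x ^ 2 * c + x * c + x)) * hc

section CheckerboardRecursion

variable {R : Type*} [CommRing R]

noncomputable def valueSeries (w : ℕ → R[T;T⁻¹]) : R⟦X⟧ :=
  mk fun n => fst (evalDual (w n))

noncomputable def derivSeries (w : ℕ → R[T;T⁻¹]) : R⟦X⟧ :=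
  mk fun n => snd (evalDual (w n))

variable {w : ℕ → R[T;T⁻¹]}

theorem valueSeries_eq (hw0 : w 0 = 1)
    (hw : ∀ n : ℕ, w (n + 1) =
      T 1 * ∑ k ∈ Finset.range (n + 1), invert (w k) * invert (w (n - k))) :
    valueSeries w = 1 + X * valueSeries w ^ 2 := by
  have hsucc (n : ℕ) : fst (evalDual (w (n + 1))) = coeff n (valueSeries w ^ 2) := by
    rw [sq, valueSeries, coeff_mk_mul_mk, hw, map_mul, evalDual_T_one, fst_mul, map_sum,
      fst_sum]
    simp [fst_evalDual_invert]
  calc valueSeries w = PowerSeries.C (fst (evalDual (w 0))) + X * valueSeries w ^ 2 :=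
        mk_eq_C_add_X_mul hsucc
    _ = 1 + X * valueSeries w ^ 2 := by simp [hw0]

theorem derivSeries_eq (hw0 : w 0 = 1)
    (hw : ∀ n : ℕ, w (n + 1) =
      T 1 * ∑ k ∈ Finset.range (n + 1), invert (w k) * invert (w (n - k))) :
    derivSeries w = X * valueSeries w ^ 2 - 2 * X * valueSeries w * derivSeries w := by
  have hsucc (n : ℕ) : snd (evalDual (w (n + 1))) =
      coeff n (valueSeries w ^ 2 -
        (valueSeries w * derivSeries w + derivSeries w * valueSeries w)) := by
    rw [sq, map_sub, map_add, valueSeries, derivSeries, coeff_mk_mul_mk, coeff_mk_mul_mk,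
      coeff_mk_mul_mk, hw, map_mul, evalDual_T_one, DualNumber.snd_mul, map_sum, fst_sum,
      snd_sum]
    simp [fst_evalDual_invert, snd_evalDual_invert, Finset.sum_add_distrib]
    ring
  calc derivSeries w = PowerSeries.C (snd (evalDual (w 0))) +
        X * (valueSeries w ^ 2 -
          (valueSeries w * derivSeries w + derivSeries w * valueSeries w)) :=
        mk_eq_C_add_X_mul hsucc
    _ = _ := by simp [hw0]; ring

end CheckerboardRecursion

/-- For the Laurent polynomials `w n` defined by `w 0 = 1` and
`w (n+1) (t) = t * ∑_{k=0}^{n} w k (t⁻¹) * w (n-k) (t⁻¹)`, the series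
`T = ∑_n w_n′(1) x^n ∈ ℚ[[x]]`, where `w_n′(1) = ∑_j j·(w_n, t^j)`, satisfies
`x − T + x(4x+3)T² = 0`. -/
theorem stmt7 (w : ℕ → ℚ[T;T⁻¹])
    (hw0 : w 0 = 1)
    (hw : ∀ n : ℕ, w (n + 1) =
      T 1 * ∑ k ∈ Finset.range (n + 1), invert (w k) * invert (w (n - k)))
    (S : ℚ⟦X⟧)
    (hS : S = PowerSeries.mk fun n => (w n).coeff.sum fun j a => (j : ℚ) * a) :
    PowerSeries.X - S + PowerSeries.X * (4 * PowerSeries.X + 3) * S ^ 2 = 0 := by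
  obtain rfl : S = derivSeries w := by simp only [hS, derivSeries, snd_evalDual]
  have hu : IsUnit (1 + 2 * X * valueSeries w) := isUnit_iff_constantCoeff.mpr (by simp)
  exact sub_add_mul_sq_eq_zero_of_eq_one_add_mul_sq hu (valueSeries_eq hw0 hw)
    (derivSeries_eq hw0 hw)
end

section
/- With w_n′(1) = ∑_{j∈ℤ} j·(w_n, t^j), one has the asymptotic equivalence w_n′(1) ∼ (3/8)·binom(2n,n)/(n+1) as n → ∞; equivalently, the sequence n ↦ w_n′(1)·(n+1)/binom(2n,n) converges to 3/8. In particular, uniform random triangulations have asymptotic mean value n_b − n_w = 3/8. -/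
/-!
Evaluating at `t = 1 + ε` in the dual numbers records `w_n(1)` and `w_n'(1)` at once, and
`t ↦ t⁻¹` becomes `ε ↦ -ε`. The recursion then gives `w_n(1) = C_n` (Catalan numbers) and,
for `d_n = w_n'(1)`, `d_{n+1} = C_{n+1} - 2 ∑_{i+j=n} C_i d_j`. Feeding the Catalan recursion
back into this convolution yields the first-order recurrence
`3 d_{n+1} + 4 d_n = C_{n+1} + 2 C_n`, so
`e_n = d_n / C_n - 3/8` satisfies `e_{n+1} = 1/(8(2n+1)) - 2(n+2)/(3(2n+1)) e_n`; the factor tends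
to `1/3`, which gives `|e_n| ≤ 1/n` for `n ≥ 2`. Finally `(n+1) / binom(2n,n) = 1 / C_n`.
-/

open LaurentPolynomial Filter DualNumber TrivSqZeroExt Finset

lemma catalan_succ_cast {R : Type*} [CommSemiring R] (n : ℕ) :
    (catalan (n + 1) : R) = ∑ ij ∈ antidiagonal n, (catalan ij.1 : R) * catalan ij.2 := by
  rw [catalan_succ']; push_cast; rfl

lemma sum_antidiagonal_catalan_mul_catalan_succ {R : Type*} [CommRing R] (n : ℕ) :
    ∑ ij ∈ antidiagonal n, (catalan ij.1 : R) * catalan (ij.2 + 1) =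
      catalan (n + 2) - catalan (n + 1) := by
  rw [catalan_succ_cast (n + 1), Nat.sum_antidiagonal_succ', catalan_zero]
  simp

lemma add_two_mul_catalan_succ (n : ℕ) :
    (n + 2) * catalan (n + 1) = 2 * (2 * n + 1) * catalan n := by
  refine Nat.eq_of_mul_eq_mul_left n.succ_pos ?_
  calc (n + 1) * ((n + 2) * catalan (n + 1))
      = (n + 1) * (n + 1).centralBinom := by rw [← succ_mul_catalan_eq_centralBinom]
    _ = 2 * (2 * n + 1) * n.centralBinom := Nat.succ_mul_centralBinom_succ n
    _ = (n + 1) * (2 * (2 * n + 1) * catalan n) := by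
      rw [← succ_mul_catalan_eq_centralBinom]; ring

lemma catalan_pos (n : ℕ) : 0 < catalan n := by
  have h := Nat.centralBinom_pos n
  rw [← succ_mul_catalan_eq_centralBinom] at h
  exact Nat.pos_of_mul_pos_left h

namespace LaurentPolynomial

variable {R : Type*} [CommRing R]

noncomputable def dualEval : R[T;T⁻¹] →ₐ[R] R[ε] :=
  AddMonoidAlgebra.lift R R[ε] ℤ
    { toFun := fun j => 1 + (j.toAdd : R) • ε
      map_one' := by simp
      map_mul' := fun i j => by
        ext <;> simp [add_smul, add_comm] }

lemma dualEval_C_mul_T (a : R) (n : ℤ) : dualEval (C a * T n) = a • (1 + (n : R) • ε) := by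
  rw [← single_eq_C_mul_T, dualEval, AddMonoidAlgebra.lift_single]
  rfl

lemma snd_dualEval (p : R[T;T⁻¹]) : (dualEval p).snd = p.coeff.sum fun j a => (j : R) * a := by
  rw [dualEval, AddMonoidAlgebra.lift_apply, Finsupp.sum, snd_sum]
  simp [Finsupp.sum, mul_comm]

lemma dualEval_T_one : dualEval (T 1 : R[T;T⁻¹]) = 1 + ε := by
  simpa using dualEval_C_mul_T (1 : R) 1

lemma fst_dualEval_invert (p : R[T;T⁻¹]) : (dualEval (invert p)).fst = (dualEval p).fst := by
  induction p using LaurentPolynomial.induction_on' with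
  | add p q hp hq => simp only [map_add, fst_add, hp, hq]
  | C_mul_T n a => simp [dualEval_C_mul_T]

lemma snd_dualEval_invert (p : R[T;T⁻¹]) : (dualEval (invert p)).snd = -(dualEval p).snd := by
  induction p using LaurentPolynomial.induction_on' with
  | add p q hp hq => simp only [map_add, snd_add, hp, hq, neg_add]
  | C_mul_T n a => simp [dualEval_C_mul_T]

lemma fst_dualEval_T_one_mul_invert (p : R[T;T⁻¹]) :
    (dualEval (T 1 * invert p)).fst = (dualEval p).fst := by
  simp [dualEval_T_one, fst_dualEval_invert]

lemma snd_dualEval_T_one_mul_invert (p : R[T;T⁻¹]) :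
    (dualEval (T 1 * invert p)).snd = (dualEval p).fst - (dualEval p).snd := by
  simp [dualEval_T_one, fst_dualEval_invert, snd_dualEval_invert, sub_eq_add_neg]

end LaurentPolynomial

section Triangulations

variable {R : Type*} [CommRing R] {w : ℕ → R[T;T⁻¹]}
  (hw : ∀ n, w (n + 1) = T 1 * ∑ k ∈ range (n + 1), invert (w k) * invert (w (n - k)))
include hw

lemma eq_T_one_mul_invert_sum_antidiagonal (n : ℕ) :
    w (n + 1) = T 1 * invert (∑ ij ∈ antidiagonal n, w ij.1 * w ij.2) := by
  simp only [hw, map_sum, map_mul, Nat.sum_antidiagonal_eq_sum_range_succ_mk]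

lemma fst_dualEval_succ (n : ℕ) :
    (dualEval (w (n + 1))).fst =
      ∑ ij ∈ antidiagonal n, (dualEval (w ij.1)).fst * (dualEval (w ij.2)).fst := by
  rw [eq_T_one_mul_invert_sum_antidiagonal hw, fst_dualEval_T_one_mul_invert, map_sum, fst_sum]
  simp only [map_mul, fst_mul]

lemma snd_dualEval_succ (n : ℕ) :
    (dualEval (w (n + 1))).snd =
      ∑ ij ∈ antidiagonal n, (dualEval (w ij.1)).fst * (dualEval (w ij.2)).fst -
      2 * ∑ ij ∈ antidiagonal n, (dualEval (w ij.1)).fst * (dualEval (w ij.2)).snd := by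
  have hswap := Nat.sum_antidiagonal_swap (n := n)
    (f := fun ij => (dualEval (w ij.1)).fst * (dualEval (w ij.2)).snd)
  rw [eq_T_one_mul_invert_sum_antidiagonal hw, snd_dualEval_T_one_mul_invert, map_sum, snd_sum,
    fst_sum]
  simp only [map_mul, fst_mul, DualNumber.snd_mul, sum_add_distrib, Prod.fst_swap,
    Prod.snd_swap] at hswap ⊢
  rw [← hswap]
  simp only [mul_comm (dualEval (w _)).snd]
  ring

variable (hw0 : w 0 = 1)
include hw0

lemma fst_dualEval_eq_catalan (n : ℕ) : (dualEval (w n)).fst = catalan n := by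
  induction n using Nat.strong_induction_on with
  | _ n ih =>
  cases n with
  | zero => simp [hw0]
  | succ n =>
    rw [fst_dualEval_succ hw, catalan_succ_cast]
    exact sum_congr rfl fun ij hij => by
      rw [ih ij.1 (Nat.antidiagonal.fst_lt hij), ih ij.2 (Nat.antidiagonal.snd_lt hij)]

lemma snd_dualEval_succ_eq (n : ℕ) :
    (dualEval (w (n + 1))).snd =
      catalan (n + 1) -
        2 * ∑ ij ∈ antidiagonal n, (catalan ij.1 : R) * (dualEval (w ij.2)).snd := by
  simp only [snd_dualEval_succ hw, fst_dualEval_eq_catalan hw hw0, catalan_succ_cast]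

end Triangulations

lemma three_mul_add_four_mul_of_catalan_convolution {R : Type*} [CommRing R] {d : ℕ → R}
    (hd0 : d 0 = 0)
    (hd : ∀ n, d (n + 1) =
      catalan (n + 1) - 2 * ∑ ij ∈ antidiagonal n, (catalan ij.1 : R) * d ij.2)
    (n : ℕ) : 3 * d (n + 1) + 4 * d n = catalan (n + 1) + 2 * catalan n := by
  induction n using Nat.strong_induction_on with
  | _ n ih =>
  cases n with
  | zero => norm_num [hd 0, hd0]
  | succ m =>
    have hshift : ∑ ij ∈ antidiagonal (m + 1), (catalan ij.1 : R) * d ij.2 =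
        ∑ ij ∈ antidiagonal m, (catalan ij.1 : R) * d (ij.2 + 1) := by
      rw [Nat.sum_antidiagonal_succ', hd0, mul_zero, zero_add]
    have hconv : 3 * ∑ ij ∈ antidiagonal m, (catalan ij.1 : R) * d (ij.2 + 1) +
        4 * ∑ ij ∈ antidiagonal m, (catalan ij.1 : R) * d ij.2 =
        catalan (m + 2) + catalan (m + 1) := by
      calc _ = ∑ ij ∈ antidiagonal m, (catalan ij.1 : R) * (3 * d (ij.2 + 1) + 4 * d ij.2) := by
            simp only [mul_sum, ← sum_add_distrib]
            exact sum_congr rfl fun _ _ => by ring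
        _ = ∑ ij ∈ antidiagonal m,
              (catalan ij.1 : R) * (catalan (ij.2 + 1) + 2 * catalan ij.2) :=
            sum_congr rfl fun ij hij => by rw [ih ij.2 (Nat.antidiagonal.snd_lt hij)]
        _ = catalan (m + 2) + catalan (m + 1) := by
            simp only [mul_add, sum_add_distrib, mul_left_comm _ (2 : R), ← mul_sum,
              sum_antidiagonal_catalan_mul_catalan_succ, ← catalan_succ_cast]
            ring
    rw [hd (m + 1), hshift, hd m]
    linear_combination (-2 : R) * hconv

section Asymptotics

variable {d : ℕ → ℝ} (hd : ∀ n, 3 * d (n + 1) + 4 * d n = catalan (n + 1) + 2 * catalan n)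
include hd

lemma div_catalan_succ_sub (n : ℕ) :
    d (n + 1) / catalan (n + 1) - 3 / 8 =
      1 / (8 * (2 * n + 1)) - 2 * (n + 2) / (3 * (2 * n + 1)) * (d n / catalan n - 3 / 8) := by
  have hC : ((n : ℝ) + 2) * catalan (n + 1) = 2 * (2 * n + 1) * catalan n := by
    exact_mod_cast add_two_mul_catalan_succ n
  have hCn : (catalan n : ℝ) ≠ 0 := by exact_mod_cast (catalan_pos n).ne'
  have hCn1 : (catalan (n + 1) : ℝ) ≠ 0 := by exact_mod_cast (catalan_pos (n + 1)).ne'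
  have : (2 * n + 1 : ℝ) ≠ 0 := by positivity
  field_simp
  linear_combination 8 * (2 * n + 1) * (catalan n : ℝ) * hd n +
    (16 * d n - 8 * catalan n) * hC

lemma abs_div_catalan_sub_le (hd0 : d 0 = 0) {n : ℕ} (hn : 2 ≤ n) :
    |d n / catalan n - 3 / 8| ≤ 1 / n := by
  induction n, hn using Nat.le_induction with
  | base =>
    have h0 := hd 0
    have h1 := hd 1
    simp only [catalan_zero, catalan_one, hd0] at h0 h1
    norm_num [catalan_two] at h0 h1 ⊢
    rw [show d 2 = 0 by linarith]
    norm_num [abs_of_neg]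
  | succ n hn ih =>
    have hn' : (2 : ℝ) ≤ n := by exact_mod_cast hn
    rw [div_catalan_succ_sub hd]
    calc _ ≤ 1 / (8 * (2 * n + 1)) +
          2 * (n + 2) / (3 * (2 * n + 1)) * |d n / catalan n - 3 / 8| := by
          refine (abs_sub _ _).trans ?_
          rw [abs_mul, abs_of_pos (by positivity), abs_of_pos (by positivity)]
      _ ≤ 1 / (8 * (2 * n + 1)) + 2 * (n + 2) / (3 * (2 * n + 1)) * (1 / n) := by gcongr
      _ ≤ 1 / ↑(n + 1) := by
          rw [div_mul_div_comm, div_add_div _ _ (by positivity) (by positivity),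
            div_le_div_iff₀ (by positivity) (by positivity)]
          have hpoly : 0 ≤ (2 * (n : ℝ) + 1) * ((n - 2) * (29 * n + 31) + 30) := by
            have : (0 : ℝ) ≤ n - 2 := by linarith
            positivity
          push_cast
          linarith

lemma tendsto_div_catalan (hd0 : d 0 = 0) :
    Tendsto (fun n => d n / catalan n) atTop (nhds (3 / 8)) := by
  rw [← tendsto_sub_nhds_zero_iff]
  refine squeeze_zero_norm' ?_ tendsto_one_div_atTop_nhds_zero_nat
  filter_upwards [eventually_ge_atTop 2] with n hn
  exact abs_div_catalan_sub_le hd hd0 hn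

end Asymptotics

/-- For the Laurent polynomials `w n` defined by `w 0 = 1` and
`w (n+1) (t) = t * ∑_{k=0}^{n} w k (t⁻¹) * w (n-k) (t⁻¹)`, and
`w_n′(1) = ∑_j j·(w_n, t^j)`, one has `w_n′(1) ∼ (3/8)·binom(2n,n)/(n+1)` as `n → ∞`,
i.e. `w_n′(1)·(n+1)/binom(2n,n) → 3/8`. -/
theorem stmt8 (w : ℕ → ℚ[T;T⁻¹])
    (hw0 : w 0 = 1)
    (hw : ∀ n : ℕ, w (n + 1) =
      T 1 * ∑ k ∈ Finset.range (n + 1), invert (w k) * invert (w (n - k))) :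
    Tendsto (fun n : ℕ =>
        ((((w n).coeff.sum fun j a => (j : ℚ) * a : ℚ)) : ℝ) * ((n : ℝ) + 1)
          / ((2 * n).choose n : ℝ))
      atTop (nhds (3 / 8 : ℝ)) := by
  have hd0 : (dualEval (w 0)).snd = 0 := by simp [hw0]
  have hlin := three_mul_add_four_mul_of_catalan_convolution
    (d := fun n => (dualEval (w n)).snd) hd0 (snd_dualEval_succ_eq hw hw0)
  have hlim := tendsto_div_catalan (d := fun n => ((dualEval (w n)).snd : ℝ))
    (fun n => by exact_mod_cast hlin n) (by simp [hd0])
  refine hlim.congr fun n => ?_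
  have hC : ((catalan n : ℕ) : ℝ) ≠ 0 := by exact_mod_cast (catalan_pos n).ne'
  rw [← snd_dualEval, ← Nat.centralBinom_eq_two_mul_choose,
    ← succ_mul_catalan_eq_centralBinom]
  push_cast
  field_simp
end

section
/- For every nonzero complex number t and every complex number x with max(|t|^{1/3}·|x|, |t|^{−1/3}·|x|) < 1/4, the series ∑_{n≥0} w_n(t)·x^n converges absolutely, where w_n(t) = ∑_{j∈ℤ} (w_n, t^j)·t^j ∈ ℂ is the evaluation of the Laurent polynomial w_n at t. -/
/-!
Write `‖t‖ = a ^ 3`. By strong induction along the recursion,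
`‖w n (t)‖ ≤ C n * max (a ^ (-n)) (a ^ (n + 2))` with `C n` the Catalan numbers: the substitution
`t ↦ t⁻¹` reflects the exponent window `[-n, n + 2]`, the products of two reflected windows of
total size `n` land in `[-(n + 4), n]`, and the factor `t` shifts this by `3` onto the window for
`n + 1`, while the Catalan recursion accounts for the sum. As `C n ≤ 4 ^ n` and the window maximum
is at most `max a a⁻¹ ^ (n + 2)`, the series is dominated by a geometric series of ratio
`4 * max a a⁻¹ * ‖x‖ < 1`.
-/

open LaurentPolynomial

namespace LaurentPolynomial

variable {R S : Type*} [CommSemiring R] [CommSemiring S] (f : R →+* S) (x : Sˣ)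

theorem eval₂_invert (p : R[T;T⁻¹]) : eval₂ f x (invert p) = eval₂ f x⁻¹ p := by
  induction p using LaurentPolynomial.induction_on' with
  | add p q hp hq => simp only [map_add, hp, hq]
  | C_mul_T n a => simp [zpow_neg]

theorem eval₂_eq_sum (p : R[T;T⁻¹]) :
    eval₂ f x p = p.coeff.sum fun n r => f r * (x ^ n : Sˣ) := by
  induction p using LaurentPolynomial.induction_on' with
  | add p q hp hq =>
    rw [map_add, hp, hq, AddMonoidAlgebra.coeff_add, Finsupp.sum_add_index'] <;> simp [add_mul]
  | C_mul_T n a =>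
    rw [eval₂_C_mul_T, ← single_eq_C_mul_T, AddMonoidAlgebra.coeff_single, Finsupp.sum_single_index]
    simp

end LaurentPolynomial

section Envelope

variable {α : Type*} [Semifield α] [LinearOrder α] [IsStrictOrderedRing α]

theorem zpow_le_max_of_le_of_le {a : α} (ha : 0 < a) {m n k : ℤ} (hm : m ≤ n) (hk : n ≤ k) :
    a ^ n ≤ max (a ^ m) (a ^ k) := by
  rcases le_total a 1 with h | h
  · exact le_max_of_le_left (zpow_le_zpow_right_of_le_one₀ ha h hm)
  · exact le_max_of_le_right (zpow_le_zpow_right₀ h hk)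

theorem one_le_max_inv {a : α} (ha : 0 < a) : 1 ≤ max a a⁻¹ := by
  rcases le_total a 1 with h | h
  · exact le_max_of_le_right ((one_le_inv₀ ha).2 h)
  · exact le_max_of_le_left h

/-- With `a ^ 3 = ‖t‖`, this is the size of `t ^ j` maximized over `-n ≤ 3 j ≤ n + 2`. -/
def envelope (a : α) (n : ℕ) : α := max (a ^ (-(n : ℤ))) (a ^ ((n : ℤ) + 2))

theorem pow_three_mul_envelope_inv_mul_le {a : α} (ha : 0 < a) (k m : ℕ) :
    a ^ 3 * (envelope a⁻¹ k * envelope a⁻¹ m) ≤ envelope a (k + m + 1) := by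
  simp only [envelope, inv_zpow', neg_neg]
  rw [← zpow_natCast]
  rcases max_cases (a ^ (k : ℤ)) (a ^ (-((k : ℤ) + 2))) with ⟨h, -⟩ | ⟨h, -⟩ <;>
    rcases max_cases (a ^ (m : ℤ)) (a ^ (-((m : ℤ) + 2))) with ⟨h', -⟩ | ⟨h', -⟩ <;>
    rw [h, h', ← zpow_add₀ ha.ne', ← zpow_add₀ ha.ne'] <;>
    exact zpow_le_max_of_le_of_le ha (by push_cast; omega) (by push_cast; omega)

theorem envelope_le_max_inv_pow {a : α} (ha : 0 < a) (n : ℕ) :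
    envelope a n ≤ max a a⁻¹ ^ (n + 2) := by
  have hA := one_le_max_inv ha
  refine max_le ?_ ?_
  · calc a ^ (-(n : ℤ)) = a⁻¹ ^ n := by rw [zpow_neg, zpow_natCast, inv_pow]
      _ ≤ max a a⁻¹ ^ n := pow_le_pow_left₀ (inv_nonneg.2 ha.le) (le_max_right a a⁻¹) n
      _ ≤ max a a⁻¹ ^ (n + 2) := pow_le_pow_right₀ hA (by omega)
  · exact_mod_cast pow_le_pow_left₀ ha.le (le_max_left a a⁻¹) (n + 2)

end Envelope

theorem norm_eval₂_le_catalan_mul_envelope {R K : Type*} [CommSemiring R] [NormedField K]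
    (f : R →+* K) (w : ℕ → R[T;T⁻¹]) (hw0 : w 0 = 1)
    (hw : ∀ n : ℕ, w (n + 1) =
      T 1 * ∑ k ∈ Finset.range (n + 1), invert (w k) * invert (w (n - k)))
    (n : ℕ) (u : Kˣ) {a : ℝ} (ha : 0 < a) (hu : ‖(u : K)‖ = a ^ 3) :
    ‖eval₂ f u (w n)‖ ≤ catalan n * envelope a n := by
  induction n using Nat.strong_induction_on generalizing u a with
  | _ n ih =>
  cases n with
  | zero => simp [hw0, envelope]
  | succ n =>
    have hu_inv : ‖((u⁻¹ : Kˣ) : K)‖ = a⁻¹ ^ 3 := by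
      rw [Units.val_inv_eq_inv_val, norm_inv, hu, inv_pow]
    have hterm : ∀ k ∈ Finset.range (n + 1),
        ‖eval₂ f u (invert (w k) * invert (w (n - k)))‖ * ‖(u : K)‖ ≤
          catalan k * catalan (n - k) * envelope a (n + 1) := by
      intro k hk
      have hkn : k ≤ n := Finset.mem_range_succ_iff.1 hk
      have h₁ := ih k (by omega) u⁻¹ (inv_pos.2 ha) hu_inv
      have h₂ := ih (n - k) (by omega) u⁻¹ (inv_pos.2 ha) hu_inv
      rw [map_mul, eval₂_invert, eval₂_invert, norm_mul, hu]
      calc ‖eval₂ f u⁻¹ (w k)‖ * ‖eval₂ f u⁻¹ (w (n - k))‖ * a ^ 3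
          ≤ (catalan k * envelope a⁻¹ k) * (catalan (n - k) * envelope a⁻¹ (n - k)) * a ^ 3 := by
            refine mul_le_mul_of_nonneg_right ?_ (by positivity)
            exact mul_le_mul h₁ h₂ (norm_nonneg _) ((norm_nonneg _).trans h₁)
        _ = catalan k * catalan (n - k) * (a ^ 3 * (envelope a⁻¹ k * envelope a⁻¹ (n - k))) := by
            ring
        _ ≤ catalan k * catalan (n - k) * envelope a (n + 1) := by
            gcongr
            simpa [Nat.add_sub_cancel' hkn] using pow_three_mul_envelope_inv_mul_le ha k (n - k)
    calc ‖eval₂ f u (w (n + 1))‖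
        = ‖∑ k ∈ Finset.range (n + 1), eval₂ f u (invert (w k) * invert (w (n - k)))‖ *
            ‖(u : K)‖ := by
          rw [hw, map_mul, eval₂_T, zpow_one, norm_mul, mul_comm, map_sum]
      _ ≤ ∑ k ∈ Finset.range (n + 1),
            ‖eval₂ f u (invert (w k) * invert (w (n - k)))‖ * ‖(u : K)‖ := by
          rw [← Finset.sum_mul]; gcongr; exact norm_sum_le _ _
      _ ≤ ∑ k ∈ Finset.range (n + 1), (catalan k * catalan (n - k) * envelope a (n + 1) : ℝ) :=
          Finset.sum_le_sum hterm
      _ = catalan (n + 1) * envelope a (n + 1) := by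
          rw [← Finset.sum_mul, catalan_succ,
            ← Finset.sum_range fun i => catalan i * catalan (n - i)]
          push_cast; rfl

theorem catalan_le_four_pow (n : ℕ) : catalan n ≤ 4 ^ n :=
  calc catalan n ≤ (n + 1) * catalan n := Nat.le_mul_of_pos_left _ n.succ_pos
    _ = n.centralBinom := succ_mul_catalan_eq_centralBinom n
    _ ≤ 4 ^ n := Nat.centralBinom_le_four_pow n

/-- For the Laurent polynomials `w n` defined by `w 0 = 1` and
`w (n+1) (t) = t * ∑_{k=0}^{n} w k (t⁻¹) * w (n-k) (t⁻¹)`, and every `t ∈ ℂ*`, `x ∈ ℂ`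
with `max(|t|^{1/3}|x|, |t|^{−1/3}|x|) < 1/4`, the series `∑_n w_n(t)·x^n` converges
absolutely, `w_n(t) = ∑_j (w_n, t^j)·t^j` being the evaluation of `w n` at `t`. -/
theorem stmt9 (w : ℕ → ℚ[T;T⁻¹])
    (hw0 : w 0 = 1)
    (hw : ∀ n : ℕ, w (n + 1) =
      T 1 * ∑ k ∈ Finset.range (n + 1), invert (w k) * invert (w (n - k)))
    (t x : ℂ) (ht : t ≠ 0)
    (hbound : max (‖t‖ ^ ((1 : ℝ) / 3) * ‖x‖)
        (‖t‖ ^ (-(1 : ℝ) / 3) * ‖x‖) < 1 / 4) :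
    Summable fun n : ℕ =>
      ‖((w n).coeff.sum fun j a => (a : ℂ) * t ^ j) * x ^ n‖ := by
  set a : ℝ := ‖t‖ ^ ((1 : ℝ) / 3)
  have ha : 0 < a := Real.rpow_pos_of_pos (norm_pos_iff.2 ht) _
  have hta : ‖((Units.mk0 t ht : ℂˣ) : ℂ)‖ = a ^ 3 := by
    rw [Units.val_mk0, ← Real.rpow_natCast, ← Real.rpow_mul (norm_nonneg t)]; norm_num
  set A := max a a⁻¹
  have hr : 4 * (A * ‖x‖) < 1 := by
    rw [neg_div, Real.rpow_neg (norm_nonneg t)] at hbound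
    rw [max_mul_of_nonneg _ _ (norm_nonneg x)]; linarith
  refine Summable.of_nonneg_of_le (fun _ => norm_nonneg _) (fun n => ?_)
    ((summable_geometric_of_lt_one (by positivity) hr).mul_left (A ^ 2))
  calc ‖((w n).coeff.sum fun j a => (a : ℂ) * t ^ j) * x ^ n‖
      = ‖eval₂ (algebraMap ℚ ℂ) (Units.mk0 t ht) (w n)‖ * ‖x‖ ^ n := by
        rw [eval₂_eq_sum, norm_mul, norm_pow]; simp
    _ ≤ catalan n * envelope a n * ‖x‖ ^ n := by
        gcongr; exact norm_eval₂_le_catalan_mul_envelope _ w hw0 hw n _ ha hta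
    _ ≤ 4 ^ n * A ^ (n + 2) * ‖x‖ ^ n := by
        gcongr
        · exact le_max_of_le_left (zpow_nonneg ha.le _)
        · exact_mod_cast catalan_le_four_pow n
        · exact envelope_le_max_inv_pow ha n
    _ = A ^ 2 * (4 * (A * ‖x‖)) ^ n := by ring
end

section
/- The specialisations of W at t = −x and t = −x⁻¹ are well defined and constant: (a) for every integer m ≥ 1, ∑_{(n,j) ∈ ℕ×ℤ, n+j=m} (−1)^j·(w_n, t^j) = 0 (the sum has finitely many nonzero terms), i.e. W(−x, x) = 1; (b) for every integer m ≥ 1, ∑_{(n,j) ∈ ℕ×ℤ, n−j=m} (−1)^j·(w_n, t^j) = 0, and for m = 0 this sum equals 0 as well, i.e. W(−x⁻¹, x) = 0. -/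
/-!
Put `a n = w n (-x) * xⁿ` and `b n = w n (-x⁻¹) * xⁿ`. The recurrence for `w` becomes
`a (n+1) = -x² ∑ b k * b (n-k)` and `b (n+1) = -∑ a k * a (n-k)`, so `a n` and `b n` are
polynomials in `x` divisible by `x ^ (n / 2)`. Hence `A = ∑ a n` and `B = ∑ b n` converge
coefficientwise as power series, and the Cauchy product gives `A = 1 - x² B²` and `B = 1 - A²`.
Then `B = x² B² (2 - x² B²)`, so `B` is divisible by every power of `x`: `B = 0` and `A = 1`.
-/

open Finset LaurentPolynomial PowerSeries

theorem Nat.finite_setOf_div_two_le (d : ℕ) : {n : ℕ | n / 2 ≤ d}.Finite :=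
  (Set.finite_Iic (2 * d + 1)).subset fun n (hn : n / 2 ≤ d) ↦ show n ≤ 2 * d + 1 by omega

theorem pow_dvd_sum_mul {S : Type*} [CommSemiring S] {x : S} {f g : ℕ → S} {a b : ℕ → ℕ}
    {c n : ℕ} (hf : ∀ k ≤ n, x ^ a k ∣ f k) (hg : ∀ k ≤ n, x ^ b k ∣ g k)
    (hc : ∀ k ≤ n, c ≤ a k + b (n - k)) :
    x ^ c ∣ ∑ k ∈ range (n + 1), f k * g (n - k) := by
  refine dvd_sum fun k hk ↦ ?_
  have hk : k ≤ n := Nat.lt_succ_iff.mp (mem_range.mp hk)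
  exact (pow_dvd_pow x (hc k hk)).trans
    (pow_add x (a k) (b (n - k)) ▸
      mul_dvd_mul (hf k hk) (hg (n - k) (Nat.sub_le n k)))

theorem Summable.tsum_eq_add_mul_sq {α : Type*} [Ring α] [TopologicalSpace α]
    [IsTopologicalRing α] [T3Space α] {f g : ℕ → α} (c : α) (hf : Summable f) (hg : Summable g)
    (hgg : Summable fun x : ℕ × ℕ ↦ g x.1 * g x.2)
    (h : ∀ n, f (n + 1) = c * ∑ k ∈ range (n + 1), g k * g (n - k)) :
    ∑' n, f n = f 0 + c * (∑' n, g n) ^ 2 := by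
  rw [hf.tsum_eq_zero_add, sq, hg.tsum_mul_tsum_eq_tsum_sum_range hg hgg,
    ← (summable_sum_mul_range_of_summable_mul hgg).tsum_mul_left]
  simp only [h]

namespace PowerSeries

open WithPiTopology

section Semiring

variable {R : Type*} [Semiring R]

theorem finite_support_coeff_of_X_pow_dvd {ι : Type*} {f : ι → R⟦X⟧} (e : ι → ℕ)
    (he : ∀ d, {i | e i ≤ d}.Finite) (hf : ∀ i, X ^ e i ∣ f i) (d : ℕ) :
    (Function.support fun i ↦ coeff d (f i)).Finite := by
  refine (he d).subset fun i hi ↦ ?_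
  by_contra hlt
  exact hi (X_pow_dvd_iff.mp (hf i) d (not_le.mp hlt))

theorem summable_of_X_pow_dvd [TopologicalSpace R] {ι : Type*} {f : ι → R⟦X⟧} (e : ι → ℕ)
    (he : ∀ d, {i | e i ≤ d}.Finite) (hf : ∀ i, X ^ e i ∣ f i) : Summable f :=
  (summable_iff_summable_coeff R).mpr fun d ↦
    summable_of_hasFiniteSupport (finite_support_coeff_of_X_pow_dvd e he hf d)

theorem _root_.HasSum.finsum_coeff_eq [TopologicalSpace R] [T2Space R] {ι : Type*}
    {f : ι → R⟦X⟧} {s : R⟦X⟧} (hs : HasSum f s) {d : ℕ}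
    (hfin : (Function.support fun i ↦ coeff d (f i)).Finite) :
    ∑ᶠ i, coeff d (f i) = coeff d s :=
  (tsum_eq_finsum hfin).symm.trans
    (((hasSum_iff_hasSum_coeff R).mp hs d).tsum_eq)

end Semiring

section CommSemiring

variable {R : Type*} [CommSemiring R]

theorem summable_mul_of_X_pow_half_dvd [TopologicalSpace R] {f : ℕ → R⟦X⟧}
    (hf : ∀ n, X ^ (n / 2) ∣ f n) : Summable fun x : ℕ × ℕ ↦ f x.1 * f x.2 := by
  refine summable_of_X_pow_dvd (fun x ↦ x.1 / 2 + x.2 / 2) (fun d ↦ ?_)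
    (fun x ↦ by rw [pow_add]; exact mul_dvd_mul (hf x.1) (hf x.2))
  refine ((Nat.finite_setOf_div_two_le d).prod (Nat.finite_setOf_div_two_le d)).subset
    fun x (hx : x.1 / 2 + x.2 / 2 ≤ d) ↦ ?_
  exact ⟨show x.1 / 2 ≤ d by omega, show x.2 / 2 ≤ d by omega⟩

theorem eq_zero_of_eq_X_sq_mul_sq {f : R⟦X⟧} (g : R⟦X⟧) (h : f = X ^ 2 * f ^ 2 * g) :
    f = 0 := by
  have hdvd (k : ℕ) : X ^ k ∣ f := by
    induction k with
    | zero => exact one_dvd f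
    | succ k ih =>
      rw [h]
      calc X ^ (k + 1) ∣ X ^ 2 * (X ^ k) ^ 2 := Dvd.intro (X ^ (k + 1)) (by ring)
        _ ∣ X ^ 2 * f ^ 2 * g := (mul_dvd_mul_left _ (pow_dvd_pow_of_dvd ih 2)).mul_right g
  ext m
  simpa using X_pow_dvd_iff.mp (hdvd (m + 1)) m (Nat.lt_succ_self m)

end CommSemiring

section Recurrence

variable {R : Type*} [CommRing R] {P Q : ℕ → R⟦X⟧}
  (hP : ∀ n, P (n + 1) = -X ^ 2 * ∑ k ∈ range (n + 1), Q k * Q (n - k))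
  (hQ : ∀ n, Q (n + 1) = -∑ k ∈ range (n + 1), P k * P (n - k))
include hP hQ

theorem X_pow_dvd_of_rec (n : ℕ) : X ^ ((n + 1) / 2) ∣ P n ∧ X ^ (n / 2) ∣ Q n := by
  induction n using Nat.strong_induction_on with
  | _ n ih =>
  rcases n with _ | n
  · simp
  constructor
  · rw [hP, neg_mul, dvd_neg]
    refine (pow_dvd_pow X (show (n + 2) / 2 ≤ 2 + (n - 1) / 2 by omega)).trans ?_
    rw [pow_add]
    exact mul_dvd_mul_left _ (pow_dvd_sum_mul (a := (· / 2)) (b := (· / 2))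
      (fun k hk ↦ (ih k (by omega)).2) (fun k hk ↦ (ih k (by omega)).2) (fun k hk ↦ by omega))
  · rw [hQ, dvd_neg]
    exact pow_dvd_sum_mul (a := fun k ↦ (k + 1) / 2) (b := fun k ↦ (k + 1) / 2)
      (fun k hk ↦ (ih k (by omega)).1) (fun k hk ↦ (ih k (by omega)).1) (fun k hk ↦ by omega)

theorem X_pow_half_dvd_of_rec (n : ℕ) : X ^ (n / 2) ∣ P n ∧ X ^ (n / 2) ∣ Q n :=
  ⟨(pow_dvd_pow X (by omega)).trans (X_pow_dvd_of_rec hP hQ n).1, (X_pow_dvd_of_rec hP hQ n).2⟩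

theorem hasSum_of_rec [TopologicalSpace R] [IsTopologicalRing R] [T3Space R]
    (hP0 : P 0 = 1) (hQ0 : Q 0 = 1) : HasSum P 1 ∧ HasSum Q 0 := by
  have hPdvd (n : ℕ) := (X_pow_half_dvd_of_rec hP hQ n).1
  have hQdvd (n : ℕ) := (X_pow_half_dvd_of_rec hP hQ n).2
  have hPsum := summable_of_X_pow_dvd _ Nat.finite_setOf_div_two_le hPdvd
  have hQsum := summable_of_X_pow_dvd _ Nat.finite_setOf_div_two_le hQdvd
  have hA := hPsum.tsum_eq_add_mul_sq _ hQsum (summable_mul_of_X_pow_half_dvd hQdvd) hP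
  have hB := hQsum.tsum_eq_add_mul_sq (-1) hPsum (summable_mul_of_X_pow_half_dvd hPdvd)
    fun n ↦ by rw [hQ, neg_one_mul]
  rw [hP0] at hA
  rw [hQ0] at hB
  have hB0 : ∑' n, Q n = 0 := eq_zero_of_eq_X_sq_mul_sq (2 - X ^ 2 * (∑' n, Q n) ^ 2)
    (by rw [hA] at hB; linear_combination hB)
  rw [hB0, zero_pow two_ne_zero, mul_zero, add_zero] at hA
  exact ⟨hA ▸ hPsum.hasSum, hB0 ▸ hQsum.hasSum⟩

theorem finsum_coeff_of_rec (hP0 : P 0 = 1) (hQ0 : Q 0 = 1) (m : ℕ) :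
    ((Function.support fun n ↦ coeff m (P n)).Finite ∧
      ∑ᶠ n, coeff m (P n) = if m = 0 then 1 else 0) ∧
    ((Function.support fun n ↦ coeff m (Q n)).Finite ∧ ∑ᶠ n, coeff m (Q n) = 0) := by
  -- the discrete topology on `R` only serves to write these finite sums as `tsum`s
  let : TopologicalSpace R := ⊥
  have : DiscreteTopology R := ⟨rfl⟩
  obtain ⟨hPsum, hQsum⟩ := hasSum_of_rec hP hQ hP0 hQ0
  have hPfin := finite_support_coeff_of_X_pow_dvd _ Nat.finite_setOf_div_two_le
    (fun n ↦ (X_pow_half_dvd_of_rec hP hQ n).1) m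
  have hQfin := finite_support_coeff_of_X_pow_dvd _ Nat.finite_setOf_div_two_le
    (fun n ↦ (X_pow_half_dvd_of_rec hP hQ n).2) m
  refine ⟨⟨hPfin, ?_⟩, hQfin, ?_⟩
  · rw [hPsum.finsum_coeff_eq hPfin, coeff_one]
  · rw [hQsum.finsum_coeff_eq hQfin, map_zero]

end Recurrence

end PowerSeries

namespace LaurentPolynomial

variable {R : Type*} [CommRing R]

noncomputable def negT : R[T;T⁻¹] →+* R[T;T⁻¹] := eval₂ C (-(isUnit_T (R := R) 1).unit)

theorem negT_T_one : negT (T 1 : R[T;T⁻¹]) = -T 1 := by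
  simp [negT]

theorem negT_T_neg_one : negT (T (-1) : R[T;T⁻¹]) = -T (-1) := by
  rw [negT, eval₂_T, zpow_neg_one]
  refine Units.inv_eq_of_mul_eq_one_right ?_
  rw [Units.val_neg, IsUnit.unit_spec, neg_mul_neg, ← T_add, add_neg_cancel, T_zero]

theorem negT_T (n : ℤ) : negT (T n : R[T;T⁻¹]) = C ((n.negOnePow : ℤ) : R) * T n := by
  induction n using Int.induction_on with
  | zero => simp
  | succ n ih =>
    rw [Int.negOnePow_succ, Units.val_neg, Int.cast_neg, map_neg, T_add, map_mul, ih, negT_T_one]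
    ring
  | pred n ih =>
    rw [Int.negOnePow_sub, Int.negOnePow_one, mul_neg, mul_one, Units.val_neg, Int.cast_neg,
      map_neg, sub_eq_add_neg, T_add, map_mul, ih, negT_T_neg_one]
    ring

theorem coeff_mul_T (f : R[T;T⁻¹]) (n m : ℤ) : (f * T n).coeff m = f.coeff (m - n) := by
  rw [T, AddMonoidAlgebra.coeff_mul_single_apply, mul_one, sub_eq_add_neg]

theorem T_natCast_eq_mul {n k : ℕ} (hk : k ≤ n) :
    (T n : R[T;T⁻¹]) = T k * T (n - k : ℕ) := by
  rw [← T_add, Nat.cast_sub hk, add_sub_cancel]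

theorem coeff_C_mul_T (a : R) (n m : ℤ) : (C a * T n).coeff m = if n = m then a else 0 := by
  rw [← single_eq_C_mul_T]
  exact Finsupp.single_apply

theorem coeff_negT (f : R[T;T⁻¹]) (j : ℤ) :
    (negT f).coeff j = ((j.negOnePow : ℤ) : R) * f.coeff j := by
  induction f using LaurentPolynomial.induction_on' with
  | add p q hp hq => simp [hp, hq, mul_add]
  | C_mul_T n a =>
    rw [map_mul, negT_T, negT, eval₂_C, ← mul_assoc, ← map_mul, coeff_C_mul_T, coeff_C_mul_T]
    split_ifs with h
    · subst h; ring
    · simp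

theorem coeff_toLaurent_natCast (p : Polynomial R) (m : ℕ) :
    (Polynomial.toLaurent p).coeff m = p.coeff m := by
  rw [coeff_toLaurent, ← Nat.castEmbedding_apply (R := ℤ),
    Finsupp.mapDomain_apply Nat.castEmbedding.injective]
  rfl

section Recurrence

variable {a b : ℕ → R[T;T⁻¹]} (ha0 : a 0 = 1) (hb0 : b 0 = 1)
  (ha : ∀ n, a (n + 1) = -T 2 * ∑ k ∈ range (n + 1), b k * b (n - k))
  (hb : ∀ n, b (n + 1) = -∑ k ∈ range (n + 1), a k * a (n - k))
include ha0 hb0 ha hb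

theorem mem_range_toLaurent_of_rec (n : ℕ) :
    a n ∈ Polynomial.toLaurent.range ∧ b n ∈ Polynomial.toLaurent.range := by
  induction n using Nat.strong_induction_on with
  | _ n ih =>
  rcases n with _ | n
  · rw [ha0, hb0]
    exact ⟨one_mem _, one_mem _⟩
  have hconv {f : ℕ → R[T;T⁻¹]} (hf : ∀ k ≤ n, f k ∈ Polynomial.toLaurent.range) :
      ∑ k ∈ range (n + 1), f k * f (n - k) ∈ Polynomial.toLaurent.range :=
    sum_mem fun k hk ↦
      mul_mem (hf k (Nat.lt_succ_iff.mp (mem_range.mp hk))) (hf (n - k) (Nat.sub_le n k))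
  have hT2 : (T 2 : R[T;T⁻¹]) ∈ Polynomial.toLaurent.range := ⟨Polynomial.X ^ 2, by simp⟩
  rw [ha, hb]
  exact ⟨mul_mem (neg_mem hT2) (hconv fun k hk ↦ (ih k (by omega)).2),
    neg_mem (hconv fun k hk ↦ (ih k (by omega)).1)⟩

theorem finsum_coeff_of_rec (m : ℕ) :
    ((Function.support fun n ↦ (a n).coeff m).Finite ∧
      ∑ᶠ n, (a n).coeff m = if m = 0 then 1 else 0) ∧
    ((Function.support fun n ↦ (b n).coeff m).Finite ∧ ∑ᶠ n, (b n).coeff m = 0) := by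
  have hmem := mem_range_toLaurent_of_rec ha0 hb0 ha hb
  have hlift {f : R[T;T⁻¹]} (hf : f ∈ Polynomial.toLaurent.range) :
      Polynomial.toLaurent (trunc f) = f := by
    obtain ⟨p, rfl⟩ := hf
    rw [Polynomial.trunc_toLaurent]
  have hcoeff {f : R[T;T⁻¹]} (hf : f ∈ Polynomial.toLaurent.range) :
      PowerSeries.coeff m (trunc f : R⟦X⟧) = f.coeff m := by
    rw [Polynomial.coeff_coe, ← coeff_toLaurent_natCast, hlift hf]
  have key := PowerSeries.finsum_coeff_of_rec (P := fun n ↦ (trunc (a n) : R⟦X⟧))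
    (Q := fun n ↦ (trunc (b n) : R⟦X⟧)) ?_ ?_ ?_ ?_ m
  · simpa only [hcoeff (hmem _).1, hcoeff (hmem _).2] using key
  · intro n
    have : a (n + 1) = Polynomial.toLaurent
        (-Polynomial.X ^ 2 * ∑ k ∈ range (n + 1), trunc (b k) * trunc (b (n - k))) := by
      simp [map_sum, hlift (hmem _).2, ha n]
    rw [this, Polynomial.trunc_toLaurent, ← Polynomial.coeToPowerSeries.ringHom_apply]
    simp only [map_neg, map_mul, map_sum, map_pow, Polynomial.coeToPowerSeries.ringHom_apply,
      Polynomial.coe_X]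
  · intro n
    have : b (n + 1) = Polynomial.toLaurent
        (-∑ k ∈ range (n + 1), trunc (a k) * trunc (a (n - k))) := by
      simp [map_sum, hlift (hmem _).1, hb n]
    rw [this, Polynomial.trunc_toLaurent, ← Polynomial.coeToPowerSeries.ringHom_apply]
    simp only [map_neg, map_mul, map_sum, Polynomial.coeToPowerSeries.ringHom_apply]
  · simp only [ha0, ← Polynomial.toLaurent_one, Polynomial.trunc_toLaurent, Polynomial.coe_one]
  · simp only [hb0, ← Polynomial.toLaurent_one, Polynomial.trunc_toLaurent, Polynomial.coe_one]

end Recurrence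

end LaurentPolynomial

section Specialisation

variable {R : Type*} [CommRing R] (w : ℕ → R[T;T⁻¹])

/-- The `n`-th term `w n (-x) * xⁿ` of `W(-x, x)`, as a Laurent polynomial in `x`. -/
noncomputable def termAtNegX (n : ℕ) : R[T;T⁻¹] := negT (w n) * T n

/-- The `n`-th term `w n (-x⁻¹) * xⁿ` of `W(-x⁻¹, x)`, as a Laurent polynomial in `x`. -/
noncomputable def termAtNegInvX (n : ℕ) : R[T;T⁻¹] := negT (invert (w n)) * T n

variable {w} (hw : ∀ n : ℕ, w (n + 1) =
  T 1 * ∑ k ∈ range (n + 1), invert (w k) * invert (w (n - k)))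
include hw

theorem termAtNegX_succ (n : ℕ) :
    termAtNegX w (n + 1) =
      -T 2 * ∑ k ∈ range (n + 1), termAtNegInvX w k * termAtNegInvX w (n - k) := by
  rw [termAtNegX, hw, map_mul, negT_T_one, map_sum, mul_sum, sum_mul, mul_sum]
  refine sum_congr rfl fun k hk ↦ ?_
  have hT : (T 1 * T ((n + 1 : ℕ) : ℤ) : R[T;T⁻¹]) = T 2 * (T k * T (n - k : ℕ)) := by
    rw [← T_natCast_eq_mul (Nat.lt_succ_iff.mp (mem_range.mp hk)), ← T_add, ← T_add]
    push_cast
    ring_nf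
  rw [termAtNegInvX, termAtNegInvX, map_mul]
  linear_combination (-(negT (invert (w k)) * negT (invert (w (n - k))))) * hT

theorem termAtNegInvX_succ (n : ℕ) :
    termAtNegInvX w (n + 1) = -∑ k ∈ range (n + 1), termAtNegX w k * termAtNegX w (n - k) := by
  rw [termAtNegInvX, hw, map_mul, invert_T, map_mul, negT_T_neg_one, map_sum, map_sum, mul_sum,
    sum_mul, ← sum_neg_distrib]
  refine sum_congr rfl fun k hk ↦ ?_
  have hT : (T (-1) * T ((n + 1 : ℕ) : ℤ) : R[T;T⁻¹]) = T k * T (n - k : ℕ) := by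
    rw [← T_natCast_eq_mul (Nat.lt_succ_iff.mp (mem_range.mp hk)), ← T_add]
    push_cast
    ring_nf
  rw [termAtNegX, termAtNegX, map_mul, map_mul, involutive_invert, involutive_invert]
  linear_combination (-(negT (w k) * negT (w (n - k)))) * hT

end Specialisation

section Field

variable {K : Type*} [Field K] (w : ℕ → K[T;T⁻¹])

theorem coeff_termAtNegX (n : ℕ) (m : ℤ) :
    (termAtNegX w n).coeff m = (-1) ^ (m - n) * (w n).coeff (m - n) := by
  rw [termAtNegX, coeff_mul_T, coeff_negT, Int.cast_negOnePow]

theorem coeff_termAtNegInvX (n : ℕ) (m : ℤ) :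
    (termAtNegInvX w n).coeff m = (-1) ^ ((n : ℤ) - m) * (w n).coeff (n - m) := by
  rw [termAtNegInvX, coeff_mul_T, coeff_negT, invert_apply, ← neg_sub, Int.negOnePow_neg,
    Int.cast_negOnePow, neg_neg]

end Field

/-- For the Laurent polynomials `w n` defined by `w 0 = 1` and
`w (n+1) (t) = t * ∑_{k=0}^{n} w k (t⁻¹) * w (n-k) (t⁻¹)`, the specialisations of
`W = ∑ w_n(t) x^n` at `t = −x` and `t = −x⁻¹` are well defined and constant:
(a) for each `m ≥ 1` the (finitely supported) sum over pairs `(n,j)` with `n+j = m` of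
`(−1)^j (w_n,t^j)` vanishes, i.e. `W(−x,x) = 1`; (b) for each `m ≥ 0` the sum over pairs
`(n,j)` with `n−j = m` of `(−1)^j (w_n,t^j)` vanishes, i.e. `W(−x⁻¹,x) = 0`. -/
theorem stmt10 (w : ℕ → ℚ[T;T⁻¹])
    (hw0 : w 0 = 1)
    (hw : ∀ n : ℕ, w (n + 1) =
      T 1 * ∑ k ∈ Finset.range (n + 1), invert (w k) * invert (w (n - k))) :
    (∀ m : ℕ,
      (Function.support fun n : ℕ =>
        (-1 : ℚ) ^ ((m : ℤ) - n) * (w n).coeff ((m : ℤ) - n)).Finite ∧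
      (1 ≤ m → ∑ᶠ n : ℕ, (-1 : ℚ) ^ ((m : ℤ) - n) * (w n).coeff ((m : ℤ) - n) = 0)) ∧
    (∀ m : ℕ,
      (Function.support fun n : ℕ =>
        (-1 : ℚ) ^ ((n : ℤ) - m) * (w n).coeff ((n : ℤ) - m)).Finite ∧
      ∑ᶠ n : ℕ, (-1 : ℚ) ^ ((n : ℤ) - m) * (w n).coeff ((n : ℤ) - m) = 0) := by
  have key := LaurentPolynomial.finsum_coeff_of_rec (a := termAtNegX w) (b := termAtNegInvX w)
    (by simp [termAtNegX, hw0]) (by simp [termAtNegInvX, hw0])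
    (termAtNegX_succ hw) (termAtNegInvX_succ hw)
  simp only [← coeff_termAtNegX, ← coeff_termAtNegInvX]
  exact ⟨fun m ↦ ⟨(key m).1.1, fun hm ↦ by rw [(key m).1.2, if_neg (by omega)]⟩,
    fun m ↦ (key m).2⟩
end

section
/- The algebraic equation t(1+tx) − tW + 2tx²W² + x³W⁴ = 0 has exactly one solution W in the ring R = (ℚ[t,t⁻¹])[[x]] of formal power series in x with coefficients in ℚ[t,t⁻¹]; this solution satisfies W ≡ 1 + tx (mod x²). -/
/-!
Since `t` is a unit, the equation is equivalent to the fixed-point equation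
`W = 1 + t x + x² (2 W² + t⁻¹ x W⁴)`. The right-hand side is a contraction for the `x`-adic
filtration (if `x^m ∣ A - B` then `x^(m+1)` divides the difference of the images), so it has
exactly one fixed point, the limit of its iterates from `0`; reading the fixed-point equation
modulo `x²` gives `W ≡ 1 + t x`.
-/

open Function LaurentPolynomial PowerSeries

namespace PowerSeries

variable {R : Type*} [CommRing R]

theorem eq_of_forall_X_pow_dvd_sub {A B : R⟦X⟧} (h : ∀ m, (X : R⟦X⟧) ^ m ∣ A - B) :
    A = B := by
  refine sub_eq_zero.mp (ext fun n => ?_)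
  simpa using X_pow_dvd_iff.mp (h (n + 1)) n n.lt_succ_self

def IsXAdicContraction (F : R⟦X⟧ → R⟦X⟧) : Prop :=
  ∀ (m : ℕ) (A B : R⟦X⟧), X ^ m ∣ A - B → X ^ (m + 1) ∣ F A - F B

/-- The `x`-adic limit of the iterates `F^[k] 0`: for a contraction, the `n`-th coefficient
of `F^[k] 0` is constant for `k ≥ n + 1`. -/
noncomputable def limIterate (F : R⟦X⟧ → R⟦X⟧) : R⟦X⟧ :=
  mk fun n => coeff n (F^[n + 1] 0)

namespace IsXAdicContraction

variable {F : R⟦X⟧ → R⟦X⟧}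

theorem X_pow_dvd_iterate_sub (hF : IsXAdicContraction F) {m : ℕ} {A B : R⟦X⟧}
    (h : X ^ m ∣ A - B) (k : ℕ) :
    X ^ (m + k) ∣ F^[k] A - F^[k] B := by
  induction k with
  | zero => simpa using h
  | succ k ih => simpa only [iterate_succ_apply', ← add_assoc] using hF _ _ _ ih

theorem X_pow_dvd_iterate_sub_iterate (hF : IsXAdicContraction F) {k l : ℕ} (hkl : k ≤ l)
    (A : R⟦X⟧) :
    X ^ k ∣ F^[l] A - F^[k] A := by
  obtain ⟨j, rfl⟩ := Nat.exists_eq_add_of_le hkl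
  rw [iterate_add_apply]
  simpa using hF.X_pow_dvd_iterate_sub (by simp : X ^ 0 ∣ F^[j] A - A) k

theorem X_pow_dvd_limIterate_sub (hF : IsXAdicContraction F) (k : ℕ) :
    X ^ k ∣ limIterate F - F^[k] 0 := by
  refine X_pow_dvd_iff.mpr fun n hn => ?_
  have h := X_pow_dvd_iff.mp (hF.X_pow_dvd_iterate_sub_iterate hn 0) n n.lt_succ_self
  rw [map_sub, sub_eq_zero] at h ⊢
  simpa [limIterate] using h.symm

theorem limIterate_isFixedPt (hF : IsXAdicContraction F) : IsFixedPt F (limIterate F) := by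
  refine eq_of_forall_X_pow_dvd_sub fun k => (pow_dvd_pow X k.le_succ).trans ?_
  have h := hF _ _ _ (hF.X_pow_dvd_limIterate_sub k)
  rw [← iterate_succ_apply' F k] at h
  simpa using h.sub (hF.X_pow_dvd_limIterate_sub (k + 1))

theorem eq_of_isFixedPt (hF : IsXAdicContraction F) {A B : R⟦X⟧} (hA : IsFixedPt F A)
    (hB : IsFixedPt F B) : A = B := by
  refine eq_of_forall_X_pow_dvd_sub fun k => ?_
  have h := hF.X_pow_dvd_iterate_sub (by simp : X ^ 0 ∣ A - B) k
  rwa [zero_add, (hA.iterate k).eq, (hB.iterate k).eq] at h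

theorem existsUnique_isFixedPt (hF : IsXAdicContraction F) : ∃! W, IsFixedPt F W :=
  ⟨limIterate F, hF.limIterate_isFixedPt,
    fun _ hW => hF.eq_of_isFixedPt hW hF.limIterate_isFixedPt⟩

end IsXAdicContraction

end PowerSeries

section Quartic

variable {R : Type*} [CommRing R] (t : Rˣ)

noncomputable def quarticLHS (W : R⟦X⟧) : R⟦X⟧ :=
  PowerSeries.C (t : R) * (1 + PowerSeries.C (t : R) * X) - PowerSeries.C (t : R) * W
    + 2 * PowerSeries.C (t : R) * X ^ 2 * W ^ 2 + X ^ 3 * W ^ 4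

noncomputable def quarticStep (W : R⟦X⟧) : R⟦X⟧ :=
  1 + PowerSeries.C (t : R) * X
    + X ^ 2 * (2 * W ^ 2 + PowerSeries.C ((t⁻¹ : Rˣ) : R) * X * W ^ 4)

theorem quarticLHS_eq (W : R⟦X⟧) :
    quarticLHS t W = PowerSeries.C (t : R) * (quarticStep t W - W) := by
  have ht : PowerSeries.C (t : R) * PowerSeries.C ((t⁻¹ : Rˣ) : R) = 1 := by
    rw [← map_mul, Units.mul_inv, map_one]
  unfold quarticLHS quarticStep
  linear_combination -(X ^ 3 * W ^ 4 * ht)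

theorem quarticLHS_eq_zero_iff {W : R⟦X⟧} :
    quarticLHS t W = 0 ↔ IsFixedPt (quarticStep t) W := by
  rw [quarticLHS_eq, (t.isUnit.map PowerSeries.C).mul_right_eq_zero, sub_eq_zero]
  rfl

theorem isXAdicContraction_quarticStep : IsXAdicContraction (quarticStep t) := by
  intro m A B h
  have hpow (n : ℕ) : X ^ m ∣ A ^ n - B ^ n := h.trans (sub_dvd_pow_sub_pow A B n)
  have hdiff : quarticStep t A - quarticStep t B
      = X ^ 2 * (2 * (A ^ 2 - B ^ 2)
          + PowerSeries.C ((t⁻¹ : Rˣ) : R) * X * (A ^ 4 - B ^ 4)) := by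
    unfold quarticStep
    ring
  rw [hdiff]
  refine (pow_dvd_pow X (by omega : m + 1 ≤ 2 + m)).trans ?_
  rw [pow_add]
  exact mul_dvd_mul_left _ (((hpow 2).mul_left _).add ((hpow 4).mul_left _))

theorem coeff_zero_quarticStep (W : R⟦X⟧) : coeff 0 (quarticStep t W) = 1 := by
  simp [quarticStep]

theorem coeff_one_quarticStep (W : R⟦X⟧) : coeff 1 (quarticStep t W) = t := by
  simp [quarticStep, coeff_X_pow_mul']

end Quartic

/-- The algebraic equation `t(1+tx) − tW + 2tx²W² + x³W⁴ = 0` has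
exactly one solution `W` in `R = (ℚ[t,t⁻¹])[[x]]`, and this solution satisfies
`W ≡ 1 + tx (mod x²)`. -/
theorem stmt11 :
    ∃ W : (ℚ[T;T⁻¹])⟦X⟧,
      (PowerSeries.C (T 1) * (1 + PowerSeries.C (T 1) * PowerSeries.X)
        - PowerSeries.C (T 1) * W
        + 2 * PowerSeries.C (T 1) * PowerSeries.X ^ 2 * W ^ 2
        + PowerSeries.X ^ 3 * W ^ 4 = 0) ∧
      PowerSeries.coeff 0 W = 1 ∧
      PowerSeries.coeff 1 W = T 1 ∧
      ∀ W' : (ℚ[T;T⁻¹])⟦X⟧,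
        (PowerSeries.C (T 1) * (1 + PowerSeries.C (T 1) * PowerSeries.X)
          - PowerSeries.C (T 1) * W'
          + 2 * PowerSeries.C (T 1) * PowerSeries.X ^ 2 * W' ^ 2
          + PowerSeries.X ^ 3 * W' ^ 4 = 0) → W' = W := by
  let t : (ℚ[T;T⁻¹])ˣ := (isUnit_T 1).unit
  obtain ⟨W, hW, hW_unique⟩ := (isXAdicContraction_quarticStep t).existsUnique_isFixedPt
  refine ⟨W, (quarticLHS_eq_zero_iff t).mpr hW, ?_, ?_, ?_⟩
  · rw [← hW, coeff_zero_quarticStep]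
  · rw [← hW, coeff_one_quarticStep, IsUnit.unit_spec]
  · exact fun W' hW' => hW_unique W' ((quarticLHS_eq_zero_iff t).mp hW')
end

section
/- Let D_L, D_R, D̃_L, D̃_R be the ℚ-linear operators on R = (ℚ[t,t⁻¹])[[x]] determined on monomials by D_L(t^j x^m) = 4(1+j+m)(2−3j+m)·t^{j+1}x^{m+1}, D_R(t^j x^m) = (3j+m)(−2+3j+m)·t^j x^m, D̃_L(t^j x^m) = 4(1−j+m)(3j+m)·t^j x^{m+1}, D̃_R(t^j x^m) = (2−3j+m)(−3j+m)·t^{j+1} x^m (extended coefficientwise, each coefficient of the image being a finite sum). Then any two elements F, G ∈ R satisfying D_L F = D_R F, D̃_L F = D̃_R F, D_L G = D_R G, D̃_L G = D̃_R G and F ≡ G ≡ 1 + tx (mod x²) are equal; i.e. the two partial differential equations D_L F = D_R F and D̃_L F = D̃_R F have at most one common solution F ∈ R with F ≡ 1+tx (mod x²). -/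
/-!
`D_L` and `D̃_L` raise the `x`-degree by one while `D_R` and `D̃_R` preserve it, so the
`x^(n+1)`-coefficients of the two equations say that `D_R` and `D̃_R`, applied to the
`x^(n+1)`-coefficient of a solution, are determined by its `x^n`-coefficient. On `t^k x^m` these
act as multiplication by `(3k+m)(3k+m-2)` and `(m+2-3k)(m-3k)` (up to a shift in `t`), and the
two weights have no common zero once `m ≥ 2`. Hence every coefficient from `x^2` on is determined
by the previous one.
-/

open LaurentPolynomial PowerSeries

/-- The operator `D_L` on `(ℚ[t,t⁻¹])[[x]]`, determined coefficientwise by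
`D_L(t^j x^m) = 4(1+j+m)(2−3j+m)·t^{j+1} x^{m+1}`. -/
noncomputable def DL (F : (ℚ[T;T⁻¹])⟦X⟧) : (ℚ[T;T⁻¹])⟦X⟧ :=
  PowerSeries.mk fun m => match m with
    | 0 => 0
    | m + 1 => (PowerSeries.coeff (R := ℚ[T;T⁻¹]) m F).coeff.sum fun j a =>
        LaurentPolynomial.C (4 * (1 + (j : ℚ) + (m : ℚ)) * (2 - 3 * (j : ℚ) + (m : ℚ)) * a)
          * T (j + 1)

/-- The operator `D_R` on `(ℚ[t,t⁻¹])[[x]]`, determined coefficientwise by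
`D_R(t^j x^m) = (3j+m)(−2+3j+m)·t^j x^m`. -/
noncomputable def DR (F : (ℚ[T;T⁻¹])⟦X⟧) : (ℚ[T;T⁻¹])⟦X⟧ :=
  PowerSeries.mk fun m => (PowerSeries.coeff (R := ℚ[T;T⁻¹]) m F).coeff.sum fun j a =>
    LaurentPolynomial.C ((3 * (j : ℚ) + (m : ℚ)) * (-2 + 3 * (j : ℚ) + (m : ℚ)) * a) * T j

/-- The operator `D̃_L` on `(ℚ[t,t⁻¹])[[x]]`, determined coefficientwise by
`D̃_L(t^j x^m) = 4(1−j+m)(3j+m)·t^j x^{m+1}`. -/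
noncomputable def DtL (F : (ℚ[T;T⁻¹])⟦X⟧) : (ℚ[T;T⁻¹])⟦X⟧ :=
  PowerSeries.mk fun m => match m with
    | 0 => 0
    | m + 1 => (PowerSeries.coeff (R := ℚ[T;T⁻¹]) m F).coeff.sum fun j a =>
        LaurentPolynomial.C (4 * (1 - (j : ℚ) + (m : ℚ)) * (3 * (j : ℚ) + (m : ℚ)) * a) * T j

/-- The operator `D̃_R` on `(ℚ[t,t⁻¹])[[x]]`, determined coefficientwise by
`D̃_R(t^j x^m) = (2−3j+m)(−3j+m)·t^{j+1} x^m`. -/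
noncomputable def DtR (F : (ℚ[T;T⁻¹])⟦X⟧) : (ℚ[T;T⁻¹])⟦X⟧ :=
  PowerSeries.mk fun m => (PowerSeries.coeff (R := ℚ[T;T⁻¹]) m F).coeff.sum fun j a =>
    LaurentPolynomial.C ((2 - 3 * (j : ℚ) + (m : ℚ)) * (-3 * (j : ℚ) + (m : ℚ)) * a)
      * T (j + 1)

theorem LaurentPolynomial.coeff_sum_C_mul_T_apply {R : Type*} [Semiring R] (c : ℤ → R)
    {e : ℤ → ℤ} (he : Function.Injective e) (f : R[T;T⁻¹]) (k : ℤ) :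
    (f.coeff.sum fun j a => C (c j * a) * T (e j)).coeff (e k) = c k * f.coeff k := by
  simp only [← single_eq_C_mul_T, AddMonoidAlgebra.coeff_finsuppSum,
    AddMonoidAlgebra.coeff_single, Finsupp.sum_apply, Finsupp.single_apply, he.eq_iff,
    Finsupp.sum_ite_eq']
  split_ifs with hk
  · rfl
  · rw [Finsupp.notMem_support_iff.mp hk, mul_zero]

theorem coeff_coeff_DR (F : (ℚ[T;T⁻¹])⟦X⟧) (m : ℕ) (k : ℤ) :
    (coeff m (DR F)).coeff k =
      (3 * (k : ℚ) + m) * (-2 + 3 * (k : ℚ) + m) * (coeff m F).coeff k := by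
  rw [DR, coeff_mk]
  exact coeff_sum_C_mul_T_apply (fun j : ℤ => (3 * (j : ℚ) + m) * (-2 + 3 * (j : ℚ) + m))
    (e := fun j => j) (fun _ _ h => h) _ k

theorem coeff_coeff_DtR (F : (ℚ[T;T⁻¹])⟦X⟧) (m : ℕ) (k : ℤ) :
    (coeff m (DtR F)).coeff (k + 1) =
      (2 - 3 * (k : ℚ) + m) * (-3 * (k : ℚ) + m) * (coeff m F).coeff k := by
  rw [DtR, coeff_mk]
  exact coeff_sum_C_mul_T_apply (fun j : ℤ => (2 - 3 * (j : ℚ) + m) * (-3 * (j : ℚ) + m))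
    (add_left_injective 1) _ k

theorem DR_weight_ne_zero_or_DtR_weight_ne_zero (k : ℤ) {m : ℕ} (hm : 2 ≤ m) :
    (3 * (k : ℚ) + m) * (-2 + 3 * (k : ℚ) + m) ≠ 0 ∨
      (2 - 3 * (k : ℚ) + m) * (-3 * (k : ℚ) + m) ≠ 0 := by
  have hm' : (2 : ℚ) ≤ m := by exact_mod_cast hm
  by_contra! h
  rcases mul_eq_zero.mp h.1 with h1 | h1 <;> rcases mul_eq_zero.mp h.2 with h2 | h2 <;> linarith

theorem coeff_succ_eq_of_coeff_eq {F G : (ℚ[T;T⁻¹])⟦X⟧}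
    (hF1 : DL F = DR F) (hF2 : DtL F = DtR F) (hG1 : DL G = DR G) (hG2 : DtL G = DtR G)
    {n : ℕ} (hn : 1 ≤ n) (h : coeff n F = coeff n G) :
    coeff (n + 1) F = coeff (n + 1) G := by
  have hR : coeff (n + 1) (DR F) = coeff (n + 1) (DR G) := by
    rw [← hF1, ← hG1]
    simp only [DL, coeff_mk, h]
  have hRt : coeff (n + 1) (DtR F) = coeff (n + 1) (DtR G) := by
    rw [← hF2, ← hG2]
    simp only [DtL, coeff_mk, h]
  ext k
  rcases DR_weight_ne_zero_or_DtR_weight_ne_zero k (m := n + 1) (by omega) with hc | hc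
  · have := congrArg (fun p : ℚ[T;T⁻¹] => p.coeff k) hR
    simp only [coeff_coeff_DR] at this
    exact mul_left_cancel₀ hc this
  · have := congrArg (fun p : ℚ[T;T⁻¹] => p.coeff (k + 1)) hRt
    simp only [coeff_coeff_DtR] at this
    exact mul_left_cancel₀ hc this

/-- The two partial differential equations `D_L F = D_R F` and
`D̃_L F = D̃_R F` have at most one common solution `F ∈ (ℚ[t,t⁻¹])[[x]]` with
`F ≡ 1 + tx (mod x²)`. -/
theorem stmt12 (F G : (ℚ[T;T⁻¹])⟦X⟧)
    (hF1 : DL F = DR F) (hF2 : DtL F = DtR F)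
    (hF0 : PowerSeries.coeff (R := ℚ[T;T⁻¹]) 0 F = 1)
    (hF1' : PowerSeries.coeff (R := ℚ[T;T⁻¹]) 1 F = T 1)
    (hG1 : DL G = DR G) (hG2 : DtL G = DtR G)
    (hG0 : PowerSeries.coeff (R := ℚ[T;T⁻¹]) 0 G = 1)
    (hG1' : PowerSeries.coeff (R := ℚ[T;T⁻¹]) 1 G = T 1) :
    F = G := by
  have hpos : ∀ n : ℕ, coeff (n + 1) F = coeff (n + 1) G := by
    intro n
    induction n with
    | zero => rw [hF1', hG1']
    | succ n ih => exact coeff_succ_eq_of_coeff_eq hF1 hF2 hG1 hG2 (by omega) ih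
  refine PowerSeries.ext fun n => ?_
  rcases n with _ | n
  · rw [hF0, hG0]
  · exact hpos n
end

section
/- Let d ≥ 2 be an integer and let g ∈ ℚ[[x]] be the unique formal power series satisfying g = 1 + x·g^d. Then for every n ∈ ℕ the coefficient of x^n in g equals binom(dn, n)/((d−1)n+1). (Combinatorially, this coefficient is the number of d-dissections of a strictly convex polygon with (d−1)n+2 vertices into n polygons with d+1 vertices each.) -/
/-!
Expanding `g ^ k = (1 + X * g ^ d) ^ k` binomially expresses `[xⁿ] g ^ k` through the
coefficients `[x^(n-j)] g ^ (d * j)` of lower order, so strong induction on `n` proves the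
Fuss–Catalan formula `[xⁿ] g ^ k = k / (d n + k) * C(d n + k, n)` for all `k ≥ 1` at once.
In the induction step every `g ^ (d * j)` has the same `d (n - j) + d j = d n`, and the
resulting sum `∑ j C(k, j) j C(d n, n - j) = k C(d n + k - 1, n - 1)` is Vandermonde's identity
after absorbing `j C(k, j) = k C(k - 1, j - 1)`. The theorem is the case `k = 1`.
-/

open PowerSeries Finset

lemma sum_choose_succ_mul_choose (k m p : ℕ) :
    ∑ a ∈ range (p + 1), k.choose (a + 1) * (a + 1) * m.choose (p - a)
      = k * (m + k - 1).choose p := by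
  cases k with
  | zero => simp
  | succ k =>
    rw [Nat.add_succ_sub_one, add_comm m, Nat.add_choose_eq,
      Nat.sum_antidiagonal_eq_sum_range_succ_mk, mul_sum]
    refine sum_congr rfl fun a _ ↦ ?_
    rw [← Nat.add_one_mul_choose_eq]
    ring

lemma coeff_one_add_X_mul_pow {R : Type*} [CommSemiring R] (f : R⟦X⟧) (k n : ℕ) :
    coeff n ((1 + X * f) ^ k) = ∑ j ∈ range (n + 1), k.choose j * coeff (n - j) (f ^ j) := by
  set t : ℕ → R := fun j ↦ k.choose j * coeff n (X ^ j * f ^ j)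
  have hexp : coeff n ((1 + X * f) ^ k) = ∑ j ∈ range (k + 1), t j := by
    rw [add_comm, add_pow, map_sum]
    refine sum_congr rfl fun j _ ↦ ?_
    rw [one_pow, mul_one, mul_pow, ← map_natCast (C (R := R)), coeff_mul_C, mul_comm]
  have hk : ∑ j ∈ range (k + 1), t j = ∑ j ∈ range (k + n + 1), t j :=
    sum_subset (range_subset_range.2 (by omega)) fun j _ hj ↦ by
      simp [t, Nat.choose_eq_zero_of_lt (show k < j by simpa using hj)]
  have hn : ∑ j ∈ range (n + 1), t j = ∑ j ∈ range (k + n + 1), t j :=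
    sum_subset (range_subset_range.2 (by omega)) fun j _ hj ↦ by
      simp [t, coeff_X_pow_mul', show ¬j ≤ n by simpa using hj]
  rw [hexp, hk, ← hn]
  refine sum_congr rfl fun j hj ↦ ?_
  simp [t, coeff_X_pow_mul', mem_range_succ_iff.mp hj]

/-- At `n = k = 0` this is `0 / 0 = 0`, not `1`. -/
def fussCatalan (d n k : ℕ) : ℚ := k * (d * n + k).choose n / (d * n + k)

lemma fussCatalan_succ (d p k : ℕ) :
    fussCatalan d (p + 1) k = k * (d * (p + 1) + k - 1).choose p / (p + 1) := by
  rcases Nat.eq_zero_or_pos k with rfl | hk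
  · simp [fussCatalan]
  obtain ⟨N, hN⟩ : ∃ N, d * (p + 1) + k = N + 1 :=
    ⟨_, (Nat.succ_pred_eq_of_pos (by omega)).symm⟩
  have habs : ((N + 1 : ℕ) : ℚ) * N.choose p = (N + 1).choose (p + 1) * (p + 1) := by
    exact_mod_cast Nat.add_one_mul_choose_eq N p
  have hN' : (d : ℚ) * (p + 1) + k = N + 1 := by exact_mod_cast hN
  rw [fussCatalan, hN, Nat.add_sub_cancel]
  push_cast [hN'] at habs ⊢
  rw [div_eq_div_iff (by positivity) (by positivity)]
  linear_combination (-k : ℚ) * habs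

lemma fussCatalan_mul {d m j n : ℕ} (hd : 0 < d) (hn : 0 < n) (h : m + j = n) :
    fussCatalan d m (d * j) = j * (d * n).choose m / n := by
  have hsum : d * m + d * j = d * n := by rw [← h, mul_add]
  have hsumQ : (d : ℚ) * m + d * j = d * n := by exact_mod_cast hsum
  rw [fussCatalan, hsum]
  push_cast [hsumQ]
  field_simp

lemma fussCatalan_one {d : ℕ} (hd : 0 < d) (n : ℕ) :
    fussCatalan d n 1 = ((d * n).choose n : ℚ) / (((d : ℚ) - 1) * n + 1) := by
  have hle : n ≤ d * n + 1 := by nlinarith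
  have h : ((d * n).choose n : ℚ) * (d * n + 1) = (d * n + 1).choose n * (d * n + 1 - n) := by
    exact_mod_cast Nat.choose_mul_succ_eq (d * n) n
  have hd' : (1 : ℚ) ≤ d := by exact_mod_cast hd
  rw [fussCatalan, div_eq_div_iff (by positivity) (by nlinarith [n.cast_nonneg (α := ℚ)])]
  push_cast
  linear_combination -h

theorem coeff_pow_eq_fussCatalan {d : ℕ} (hd : 0 < d) {g : ℚ⟦X⟧} (hg : g = 1 + X * g ^ d)
    (n : ℕ) {k : ℕ} (hk : 0 < k) : coeff n (g ^ k) = fussCatalan d n k := by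
  induction n using Nat.strong_induction_on generalizing k with
  | _ n ih =>
    rcases n with _ | p
    · have hg0 : constantCoeff g = 1 := by simpa using congrArg constantCoeff hg
      have hk' : (k : ℚ) ≠ 0 := by positivity
      simp [hg0, fussCatalan, hk']
    have hpow : g ^ k = (1 + X * g ^ d) ^ k := by rw [← hg]
    calc coeff (p + 1) (g ^ k)
        = ∑ a ∈ range (p + 1), k.choose (a + 1) * coeff (p - a) (g ^ (d * (a + 1))) := by
          rw [hpow, coeff_one_add_X_mul_pow, sum_range_succ']
          simp [← pow_mul]
      _ = ∑ a ∈ range (p + 1),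
            (k.choose (a + 1) : ℚ) * ((a + 1) * (d * (p + 1)).choose (p - a) / (p + 1)) := by
          refine sum_congr rfl fun a ha ↦ ?_
          have hap : a ≤ p := mem_range_succ_iff.mp ha
          rw [ih (p - a) (by omega) (by positivity), fussCatalan_mul hd p.succ_pos (by omega)]
          push_cast
          ring
      _ = ((∑ a ∈ range (p + 1),
            k.choose (a + 1) * (a + 1) * (d * (p + 1)).choose (p - a) : ℕ) : ℚ) / (p + 1) := by
          push_cast
          rw [sum_div]
          refine sum_congr rfl fun a _ ↦ ?_
          ring
      _ = fussCatalan d (p + 1) k := by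
          rw [sum_choose_succ_mul_choose, fussCatalan_succ, add_comm (d * (p + 1))]
          push_cast
          ring

/-- For an integer `d ≥ 2`, if `g ∈ ℚ[[x]]` satisfies `g = 1 + x·g^d`
(the equation determining `g` uniquely), then the coefficient of `x^n` in `g` equals
`binom(dn, n)/((d−1)n+1)`, the number of `d`-dissections of a strictly convex polygon
with `(d−1)n+2` vertices. -/
theorem stmt14 (d : ℕ) (hd : 2 ≤ d) (g : ℚ⟦X⟧)
    (hg : g = 1 + PowerSeries.X * g ^ d) (n : ℕ) :
    PowerSeries.coeff n g = ((d * n).choose n : ℚ) / (((d : ℚ) - 1) * n + 1) := by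
  rw [← pow_one g, coeff_pow_eq_fussCatalan (by omega) hg n one_pos, fussCatalan_one (by omega)]
end

section
/- Let d ≥ 2 be an integer and let W_d = ∑_{n≥0} w_{d,n} x^n ∈ (ℚ[t,t⁻¹])[[x]]. Then W_d satisfies the algebraic equation W_d = 1 + t·x·(1 + t⁻¹·x·W_d^d)^d. -/
/-!
Let `V` be the series obtained from `W` by applying `t ↦ t⁻¹` to every coefficient. The recursion
for `w_{d,n+1}` says precisely that `W = 1 + t·x·V^d`, the coefficient of `x^n` in `V^d` being the
sum over `d`-tuples summing to `n`. Applying the involution `t ↦ t⁻¹` to the recursion gives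
`V = 1 + t⁻¹·x·W^d`, and substituting this into the first equation proves the claim.
-/

open LaurentPolynomial PowerSeries

namespace PowerSeries

variable {R : Type*} [CommSemiring R]

theorem coeff_pow_eq_sum_antidiagonalTuple (d n : ℕ) (φ : R⟦X⟧) :
    coeff n (φ ^ d) = ∑ k ∈ Finset.Nat.antidiagonalTuple d n, ∏ i : Fin d, coeff (k i) φ := by
  rw [← Finset.piAntidiag_univ_fin_eq_antidiagonalTuple, ← Fin.prod_const, coeff_prod,
    Finset.finsuppAntidiag, Finset.sum_map, ← Finset.sum_attach (Finset.piAntidiag _ _)]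
  rfl

theorem eq_one_add_C_mul_X_mul {F G : R⟦X⟧} {a : R} (h0 : constantCoeff F = 1)
    (hsucc : ∀ n, coeff (n + 1) F = a * coeff n G) : F = 1 + C a * X * G := by
  ext (_ | n)
  · simp [h0]
  · rw [hsucc, map_add, coeff_one, if_neg n.succ_ne_zero, zero_add, mul_assoc, coeff_C_mul,
      coeff_succ_X_mul]

theorem mk_eq_one_add_C_mul_X_mul_pow {u v : ℕ → R} {a : R} (d : ℕ) (hu0 : u 0 = 1)
    (hu : ∀ n, u (n + 1) = a * ∑ k ∈ Finset.Nat.antidiagonalTuple d n, ∏ i : Fin d, v (k i)) :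
    mk u = 1 + C a * X * mk v ^ d :=
  eq_one_add_C_mul_X_mul (by simpa using hu0) fun n => by
    simp only [coeff_mk, hu, coeff_pow_eq_sum_antidiagonalTuple]

end PowerSeries

theorem stmt15_general (d : ℕ) (w : ℕ → ℚ[T;T⁻¹])
    (hw0 : w 0 = 1)
    (hw : ∀ n : ℕ, w (n + 1) =
      T 1 * ∑ k ∈ Finset.Nat.antidiagonalTuple d n, ∏ i : Fin d, invert (w (k i)))
    (W : (ℚ[T;T⁻¹])⟦X⟧) (hW : W = PowerSeries.mk fun n => w n) :
    W = 1 + PowerSeries.C (T 1) * PowerSeries.X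
      * (1 + PowerSeries.C (T (-1)) * PowerSeries.X * W ^ d) ^ d := by
  have hW_eq : W = 1 + PowerSeries.C (T 1) * PowerSeries.X * (mk fun n => invert (w n)) ^ d :=
    hW ▸ mk_eq_one_add_C_mul_X_mul_pow d hw0 hw
  have hV_eq :
      (mk fun n => invert (w n)) = 1 + PowerSeries.C (T (-1)) * PowerSeries.X * W ^ d :=
    hW ▸ mk_eq_one_add_C_mul_X_mul_pow d (by simp [hw0]) fun n => by
      simp only [hw, map_mul, map_sum, map_prod, invert_T, involutive_invert _]
  rwa [hV_eq] at hW_eq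

/-- For `d ≥ 2` and the Laurent polynomials `w_{d,n}` defined by
`w_{d,0} = 1` and `w_{d,n+1}(t) = t·∑_{k₁+⋯+k_d = n} ∏ᵢ w_{d,kᵢ}(t⁻¹)`, the generating
series `W_d = ∑ w_{d,n} x^n` satisfies `W_d = 1 + t·x·(1 + t⁻¹·x·W_d^d)^d`. -/
theorem stmt15 (d : ℕ) (hd : 2 ≤ d) (w : ℕ → ℚ[T;T⁻¹])
    (hw0 : w 0 = 1)
    (hw : ∀ n : ℕ, w (n + 1) =
      T 1 * ∑ k ∈ Finset.Nat.antidiagonalTuple d n, ∏ i : Fin d, invert (w (k i)))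
    (W : (ℚ[T;T⁻¹])⟦X⟧) (hW : W = PowerSeries.mk fun n => w n) :
    W = 1 + PowerSeries.C (T 1) * PowerSeries.X
      * (1 + PowerSeries.C (T (-1)) * PowerSeries.X * W ^ d) ^ d :=
  stmt15_general d w hw0 hw W hW
end
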